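/- arXiv:0911.4041 — 2 statements merged into one kernel-verified Lean document; each statement's English description precedes it below -/
import Mathlib

section
/- For any μ > 0, ν > 0 and ε > 0, the period map □ : L²(𝕋²) → L²(𝕋²), ξ ↦ ξ_μ^ν(1,·), is a strict contraction; precisely, if ξ_μ^ν and ξ̃_μ^ν are the solutions of the initial value problem with data ξ and ξ̃ respectively, then ‖ξ_μ^ν(1,·) − ξ̃_μ^ν(1,·)‖₂ ≤ e^{−μ} ‖ξ − ξ̃‖₂. -/
open MeasureTheory Filter ContDiff

noncomputable section

/-- Fundamental domain of the two-dimensional torus `𝕋² = ℝ²/ℤ²`. -/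
def Tsq : Set (ℝ × ℝ) := Set.Icc (0:ℝ) 1 ×ˢ Set.Icc (0:ℝ) 1

/-- Periodicity of period 1 in each space direction: a function on `ℝ²`
defining a function on the torus `𝕋²`. -/
def SpacePeriodic {E : Type*} (f : (ℝ × ℝ) → E) : Prop :=
  ∀ x : ℝ × ℝ, f (x + (1, 0)) = f x ∧ f (x + (0, 1)) = f x

/-- Gradient of a scalar function on `ℝ²`. -/
def grad (f : (ℝ × ℝ) → ℝ) (x : ℝ × ℝ) : ℝ × ℝ :=
  (fderiv ℝ f x (1, 0), fderiv ℝ f x (0, 1))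

/-- Divergence of a vector field on `ℝ²`. -/
def div2 (F : (ℝ × ℝ) → ℝ × ℝ) (x : ℝ × ℝ) : ℝ :=
  fderiv ℝ (fun y => (F y).1) x (1, 0) + fderiv ℝ (fun y => (F y).2) x (0, 1)

/-- Laplacian of a scalar function on `ℝ²`. -/
def lap (f : (ℝ × ℝ) → ℝ) (x : ℝ × ℝ) : ℝ := div2 (grad f) x

/-- `L²(𝕋²)` norm of a scalar function. -/
def L2norm (f : (ℝ × ℝ) → ℝ) : ℝ := (∫ x in Tsq, (f x) ^ 2) ^ (1/2 : ℝ)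

/-- `L^∞(𝕋²)` norm of a (bounded) function. -/
def LinfNorm (f : (ℝ × ℝ) → ℝ) : ℝ := ⨆ x : ℝ × ℝ, |f x|

/-- `L²_#(ℝ×𝕋²)` norm : `(∫₀¹ ∫_{𝕋²} f² dx dθ)^{1/2}` for functions
1-periodic in `θ`. -/
def L2sharpNorm (f : ℝ → (ℝ × ℝ) → ℝ) : ℝ :=
  (∫ θ in Set.Icc (0:ℝ) 1, ∫ x in Tsq, (f θ x) ^ 2) ^ (1/2 : ℝ)

/-- `L^∞_#(ℝ, L²(𝕋²))` norm : `sup_{θ ∈ [0,1]} ‖f(θ,·)‖_{L²(𝕋²)}`. -/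
def LinfL2Norm (f : ℝ → (ℝ × ℝ) → ℝ) : ℝ :=
  ⨆ θ : Set.Icc (0:ℝ) 1, L2norm (f θ.1)

/-- The coefficients of the cell problem: a nonnegative regular scalar `Ã_ε(θ,x)`
and a regular vector field `C̃_ε(θ,x)`, both 1-periodic in `θ` and in space. -/
def CellCoeff (A : ℝ → (ℝ × ℝ) → ℝ) (C : ℝ → (ℝ × ℝ) → ℝ × ℝ) : Prop :=
  ContDiff ℝ (⊤ : ℕ∞) (fun p : ℝ × (ℝ × ℝ) => A p.1 p.2) ∧
  ContDiff ℝ (⊤ : ℕ∞) (fun p : ℝ × (ℝ × ℝ) => C p.1 p.2) ∧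
  (∀ θ x, 0 ≤ A θ x) ∧
  (∀ θ x, A (θ + 1) x = A θ x) ∧ (∀ θ x, C (θ + 1) x = C θ x) ∧
  (∀ θ, SpacePeriodic (A θ)) ∧ (∀ θ, SpacePeriodic (C θ))

/-- `S` is a classical solution, 1-periodic in `θ`, of the regularized cell problem
`μ S + ∂S/∂θ − ∇·((Ã_ε + ν)∇S) = ∇·C̃_ε` on `ℝ × 𝕋²`. -/
def IsRegCellSol (A : ℝ → (ℝ × ℝ) → ℝ) (C : ℝ → (ℝ × ℝ) → ℝ × ℝ)
    (μ ν : ℝ) (S : ℝ → (ℝ × ℝ) → ℝ) : Prop :=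
  ContDiff ℝ (⊤ : ℕ∞) (fun p : ℝ × (ℝ × ℝ) => S p.1 p.2) ∧
  (∀ θ x, S (θ + 1) x = S θ x) ∧
  (∀ θ, SpacePeriodic (S θ)) ∧
  (∀ θ x, μ * S θ x + deriv (fun σ => S σ x) θ
      - div2 (fun y => (A θ y + ν) • grad (S θ) y) x = div2 (C θ) x)

/-- `ξ` is a classical solution of the initial value problem
`μ ξ + ∂ξ/∂θ − ∇·((Ã_ε + ν)∇ξ) = ∇·C̃_ε` on `[0,1] × 𝕋²` with `ξ|_{θ=0} = ξ₀`. -/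
def IsIVPSol (A : ℝ → (ℝ × ℝ) → ℝ) (C : ℝ → (ℝ × ℝ) → ℝ × ℝ)
    (μ ν : ℝ) (ξ0 : (ℝ × ℝ) → ℝ) (ξ : ℝ → (ℝ × ℝ) → ℝ) : Prop :=
  ContDiff ℝ (⊤ : ℕ∞) (fun p : ℝ × (ℝ × ℝ) => ξ p.1 p.2) ∧
  (∀ θ, SpacePeriodic (ξ θ)) ∧
  (∀ θ ∈ Set.Icc (0:ℝ) 1, ∀ x : ℝ × ℝ,
    μ * ξ θ x + deriv (fun σ => ξ σ x) θ
      - div2 (fun y => (A θ y + ν) • grad (ξ θ) y) x = div2 (C θ) x) ∧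
  ξ 0 = ξ0

-- helper: contDiff of fderiv applied to fixed vector
lemma cdFderivApply {f : (ℝ×ℝ) → ℝ} (h : ContDiff ℝ ∞ f) (v : ℝ×ℝ) :
    ContDiff ℝ ∞ (fun y => fderiv ℝ f y v) :=
  ((contDiff_infty_iff_fderiv.mp h).2).clm_apply contDiff_const

-- periodicity of fderiv
lemma fderiv_periodic {f : (ℝ×ℝ) → ℝ} (hf : Differentiable ℝ f) (c : ℝ×ℝ)
    (hper : ∀ x, f (x + c) = f x) (x : ℝ×ℝ) :
    fderiv ℝ f (x + c) = fderiv ℝ f x := by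
  have h1 : (fun y => f (y + c)) = f := funext hper
  have h2 : HasFDerivAt (fun y => f (y + c)) (fderiv ℝ f (x + c)) x := by
    simpa [Function.comp_def] using (hf (x + c)).hasFDerivAt.comp x ((hasFDerivAt_id x).add_const c)
  rw [h1] at h2
  exact (h2.fderiv).symm

-- integral of a "divergence" over the cell vanishes for periodic smooth functions
lemma per_div_integral_zero (f g : (ℝ×ℝ) → ℝ) (hf : ContDiff ℝ ∞ f) (hg : ContDiff ℝ ∞ g)
    (hpf : SpacePeriodic f) (hpg : SpacePeriodic g) :
    ∫ x in Tsq, (fderiv ℝ f x (1,0) + fderiv ℝ g x (0,1)) = 0 := by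
  have hI : IntegrableOn (fun x => fderiv ℝ f x (1,0) + fderiv ℝ g x (0,1)) Tsq := by
    apply ContinuousOn.integrableOn_compact
    · exact (isCompact_Icc.prod isCompact_Icc)
    · exact (((cdFderivApply hf (1,0)).add (cdFderivApply hg (0,1))).continuous).continuousOn
  have key := MeasureTheory.integral2_divergence_prod_of_hasFDerivAt_off_countable f g
    (fun x => fderiv ℝ f x) (fun x => fderiv ℝ g x) 0 0 1 1 ∅ Set.countable_empty
    (hf.continuous.continuousOn) (hg.continuous.continuousOn)
    (fun x _ => (hf.differentiable (by simp) x).hasFDerivAt)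
    (fun x _ => (hg.differentiable (by simp) x).hasFDerivAt)
    (by simpa [Set.uIcc_of_le (zero_le_one' ℝ), Tsq] using hI)
  have hfp : ∀ y, f (1, y) = f (0, y) := fun y => by
    have := (hpf (0, y)).1; simpa using this
  have hgp : ∀ x, g (x, 1) = g (x, 0) := fun x => by
    have := (hpg (x, 0)).2; simpa using this
  rw [show ((∫ x in (0:ℝ)..1, g (x, 1)) - ∫ x in (0:ℝ)..1, g (x, 0)) +
      (∫ y in (0:ℝ)..1, f (1, y)) - ∫ y in (0:ℝ)..1, f (0, y) = 0 by
    simp [hfp, hgp]] at key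
  -- convert iterated integral to set integral over Tsq
  have h2 : ∫ x in Tsq, (fderiv ℝ f x (1,0) + fderiv ℝ g x (0,1)) =
      ∫ x in (0:ℝ)..1, ∫ y in (0:ℝ)..1, (fderiv ℝ f (x,y) (1,0) + fderiv ℝ g (x,y) (0,1)) := by
    rw [Tsq, MeasureTheory.Measure.volume_eq_prod, MeasureTheory.setIntegral_prod _ (by rw [← MeasureTheory.Measure.volume_eq_prod]; exact hI)]
    rw [intervalIntegral.integral_of_le (zero_le_one' ℝ)]
    rw [← MeasureTheory.integral_Icc_eq_integral_Ioc]
    apply MeasureTheory.setIntegral_congr_fun measurableSet_Icc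
    intro x _
    simp only []
    rw [MeasureTheory.integral_Icc_eq_integral_Ioc, ← intervalIntegral.integral_of_le (zero_le_one' ℝ)]
  rw [h2, key]

lemma integrableOn_Tsq {f : (ℝ×ℝ) → ℝ} (hf : Continuous f) : IntegrableOn f Tsq :=
  hf.continuousOn.integrableOn_compact (isCompact_Icc.prod isCompact_Icc)

lemma slice_x {W : ℝ → (ℝ×ℝ) → ℝ} (h : ContDiff ℝ ∞ (fun p : ℝ × (ℝ×ℝ) => W p.1 p.2)) (θ : ℝ) :
    ContDiff ℝ ∞ (W θ) := h.comp (contDiff_const.prodMk contDiff_id)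

lemma hasDerivAt_slice {W : ℝ → (ℝ×ℝ) → ℝ}
    (h : ContDiff ℝ ∞ (fun p : ℝ × (ℝ×ℝ) => W p.1 p.2)) (θ : ℝ) (x : ℝ×ℝ) :
    HasDerivAt (fun σ => W σ x)
      (fderiv ℝ (fun p : ℝ × (ℝ×ℝ) => W p.1 p.2) (θ, x) (1, (0,0))) θ := by
  have h1 : HasDerivAt (fun σ : ℝ => (σ, x)) ((1:ℝ), ((0:ℝ),(0:ℝ))) θ := by
    exact (hasDerivAt_id θ).prodMk (hasDerivAt_const θ x)
  exact ((h.differentiable (by simp) (θ, x)).hasFDerivAt).comp_hasDerivAt θ h1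

lemma energy_decay (A : ℝ → (ℝ×ℝ) → ℝ)
    (hAx : ∀ θ, ContDiff ℝ ∞ (A θ)) (hA0 : ∀ θ x, 0 ≤ A θ x)
    (hAper : ∀ θ, SpacePeriodic (A θ))
    (μ ν : ℝ) (hμ : 0 < μ) (hν : 0 < ν)
    (w : ℝ → (ℝ×ℝ) → ℝ) (hw : ContDiff ℝ ∞ (fun p : ℝ × (ℝ×ℝ) => w p.1 p.2))
    (hper : ∀ θ, SpacePeriodic (w θ))
    (hpde : ∀ θ ∈ Set.Icc (0:ℝ) 1, ∀ x : ℝ×ℝ,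
      μ * w θ x + deriv (fun σ => w σ x) θ
        - div2 (fun y => (A θ y + ν) • grad (w θ) y) x = 0) :
    ∫ x in Tsq, (w 1 x)^2 ≤ Real.exp (-(2*μ)) * ∫ x in Tsq, (w 0 x)^2 := by
  set W : ℝ × (ℝ×ℝ) → ℝ := fun p => w p.1 p.2 with hW
  have hwx : ∀ θ, ContDiff ℝ ∞ (w θ) := slice_x hw
  set dw : ℝ → (ℝ×ℝ) → ℝ := fun θ x => fderiv ℝ W (θ, x) (1, (0,0)) with hdw
  have hD : ∀ θ x, HasDerivAt (fun σ => w σ x) (dw θ x) θ := fun θ x => hasDerivAt_slice hw θ x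
  have hdw_cont : Continuous (fun p : ℝ × (ℝ×ℝ) => dw p.1 p.2) := by
    have := (contDiff_infty_iff_fderiv.mp hw).2
    exact (this.clm_apply contDiff_const).continuous
  -- the energy
  set E : ℝ → ℝ := fun θ => ∫ x in Tsq, (w θ x)^2 with hE
  set E' : ℝ → ℝ := fun θ => ∫ x in Tsq, 2 * w θ x * dw θ x with hE'
  have hEnn : ∀ θ, 0 ≤ E θ := fun θ =>
    MeasureTheory.integral_nonneg (fun x => sq_nonneg _)
  -- derivative of the energy
  have hEderiv : ∀ θ₀ : ℝ, HasDerivAt E (E' θ₀) θ₀ := by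
    intro θ₀
    have hKcomp : IsCompact ((Set.Icc (θ₀-1) (θ₀+1)) ×ˢ Tsq) :=
      isCompact_Icc.prod (isCompact_Icc.prod isCompact_Icc)
    have hGcont : Continuous (fun p : ℝ × (ℝ×ℝ) => 2 * w p.1 p.2 * dw p.1 p.2) := by
      exact (continuous_const.mul hw.continuous).mul hdw_cont
    obtain ⟨M, hM⟩ := hKcomp.exists_bound_of_continuousOn hGcont.continuousOn
    have hmeas : MeasurableSet Tsq := (measurableSet_Icc.prod measurableSet_Icc)
    have key := hasDerivAt_integral_of_dominated_loc_of_deriv_le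
      (F := fun θ x => (w θ x)^2) (F' := fun θ x => 2 * w θ x * dw θ x)
      (x₀ := θ₀) (bound := fun _ => M) (μ := volume.restrict Tsq)
      (s := Metric.ball θ₀ 1) (Metric.ball_mem_nhds θ₀ one_pos)
      (Filter.Eventually.of_forall (fun θ =>
        ((hwx θ).continuous.pow 2).aestronglyMeasurable))
      (integrableOn_Tsq (((hwx θ₀).continuous).pow 2))
      ((hGcont.comp (Continuous.prodMk_right θ₀)).aestronglyMeasurable)
      ?_ ?_ ?_
    · exact key.2
    · filter_upwards [MeasureTheory.ae_restrict_mem hmeas] with x hx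
      intro θ hθ
      have hθI : (θ, x) ∈ (Set.Icc (θ₀-1) (θ₀+1)) ×ˢ Tsq := by
        constructor
        · have := Metric.mem_ball.mp hθ
          rw [Real.dist_eq] at this
          constructor <;> [linarith [abs_le.mp this.le]; linarith [abs_le.mp this.le]]
        · exact hx
      simpa using hM (θ, x) hθI
    · refine (MeasureTheory.integrableOn_const_iff).2 (Or.inr ?_)
      exact (isCompact_Icc.prod isCompact_Icc).measure_lt_top
    · filter_upwards with x
      intro θ _
      have := (hD θ x).fun_pow 2
      simpa [mul_comm, mul_assoc, mul_left_comm] using this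
  -- integration by parts: E' θ ≤ -(2 μ) E θ on [0,1]
  have hIBP : ∀ θ ∈ Set.Icc (0:ℝ) 1, E' θ ≤ -(2*μ) * E θ := by
    intro θ hθ
    have hwθ := hwx θ
    have hdiffwθ : Differentiable ℝ (w θ) := hwθ.differentiable (by simp)
    set h₁ : (ℝ×ℝ) → ℝ := fun y => (A θ y + ν) * fderiv ℝ (w θ) y (1,0) with hh₁
    set h₂ : (ℝ×ℝ) → ℝ := fun y => (A θ y + ν) * fderiv ℝ (w θ) y (0,1) with hh₂
    have hh₁s : ContDiff ℝ ∞ h₁ :=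
      ((hAx θ).add contDiff_const).mul (cdFderivApply hwθ _)
    have hh₂s : ContDiff ℝ ∞ h₂ :=
      ((hAx θ).add contDiff_const).mul (cdFderivApply hwθ _)
    have hperw := hper θ
    have hh₁per : SpacePeriodic h₁ := by
      intro x
      refine ⟨?_, ?_⟩
      · simp only [hh₁]
        rw [fderiv_periodic hdiffwθ _ (fun z => (hperw z).1) x, (hAper θ x).1]
      · simp only [hh₁]
        rw [fderiv_periodic hdiffwθ _ (fun z => (hperw z).2) x, (hAper θ x).2]
    have hh₂per : SpacePeriodic h₂ := by
      intro x
      refine ⟨?_, ?_⟩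
      · simp only [hh₂]
        rw [fderiv_periodic hdiffwθ _ (fun z => (hperw z).1) x, (hAper θ x).1]
      · simp only [hh₂]
        rw [fderiv_periodic hdiffwθ _ (fun z => (hperw z).2) x, (hAper θ x).2]
    have measTsq : MeasurableSet Tsq := measurableSet_Icc.prod measurableSet_Icc
    -- identify div2 F with derivatives of h₁, h₂
    have hF1 : (fun y => ((A θ y + ν) • grad (w θ) y).1) = h₁ := by
      funext y; simp [grad, hh₁, smul_eq_mul]
    have hF2 : (fun y => ((A θ y + ν) • grad (w θ) y).2) = h₂ := by
      funext y; simp [grad, hh₂, smul_eq_mul]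
    have hdivF : ∀ x, div2 (fun y => (A θ y + ν) • grad (w θ) y) x
        = fderiv ℝ h₁ x (1,0) + fderiv ℝ h₂ x (0,1) := by
      intro x
      simp only [div2]
      rw [hF1, hF2]
    -- pointwise product rule
    have hprod : ∀ x : ℝ×ℝ,
        fderiv ℝ (fun y => w θ y * h₁ y) x (1,0) + fderiv ℝ (fun y => w θ y * h₂ y) x (0,1)
        = w θ x * (fderiv ℝ h₁ x (1,0) + fderiv ℝ h₂ x (0,1))
          + (A θ x + ν) * ((fderiv ℝ (w θ) x (1,0))^2 + (fderiv ℝ (w θ) x (0,1))^2) := by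
      intro x
      rw [fderiv_fun_mul (hdiffwθ x) (hh₁s.differentiable (by simp) x),
          fderiv_fun_mul (hdiffwθ x) (hh₂s.differentiable (by simp) x)]
      simp only [ContinuousLinearMap.add_apply, ContinuousLinearMap.smul_apply,
        smul_eq_mul, hh₁, hh₂]
      ring
    -- the divergence integral vanishes
    have hzero := per_div_integral_zero (fun y => w θ y * h₁ y) (fun y => w θ y * h₂ y)
      (hwθ.mul hh₁s) (hwθ.mul hh₂s)
      (fun x => ⟨by simp only [(hperw x).1, (hh₁per x).1],
                 by simp only [(hperw x).2, (hh₁per x).2]⟩)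
      (fun x => ⟨by simp only [(hperw x).1, (hh₂per x).1],
                 by simp only [(hperw x).2, (hh₂per x).2]⟩)
    set P : (ℝ×ℝ) → ℝ :=
      fun x => w θ x * (fderiv ℝ h₁ x (1,0) + fderiv ℝ h₂ x (0,1)) with hP
    set Q : (ℝ×ℝ) → ℝ :=
      fun x => (A θ x + ν) * ((fderiv ℝ (w θ) x (1,0))^2 + (fderiv ℝ (w θ) x (0,1))^2) with hQ
    have hPcont : Continuous P :=
      hwθ.continuous.mul (((cdFderivApply hh₁s (1,0)).add (cdFderivApply hh₂s (0,1))).continuous)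
    have hQcont : Continuous Q :=
      (((hAx θ).continuous).add continuous_const).mul
        ((((cdFderivApply hwθ (1,0)).continuous).pow 2).add
          (((cdFderivApply hwθ (0,1)).continuous).pow 2))
    have hPint : IntegrableOn P Tsq := integrableOn_Tsq hPcont
    have hQint : IntegrableOn Q Tsq := integrableOn_Tsq hQcont
    have hzero' : (∫ x in Tsq, P x) + (∫ x in Tsq, Q x) = 0 := by
      rw [← MeasureTheory.integral_add hPint hQint, ← hzero]
      exact MeasureTheory.setIntegral_congr_fun measTsq (fun x _ => (hprod x).symm)
    have hQnn : 0 ≤ ∫ x in Tsq, Q x := by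
      apply MeasureTheory.integral_nonneg
      intro x
      exact mul_nonneg (add_nonneg (hA0 θ x) hν.le)
        (add_nonneg (sq_nonneg _) (sq_nonneg _))
    have hPle : (∫ x in Tsq, P x) ≤ 0 := by linarith
    -- use the PDE
    have hdweq : ∀ x, dw θ x = (fderiv ℝ h₁ x (1,0) + fderiv ℝ h₂ x (0,1)) - μ * w θ x := by
      intro x
      have h0 := hpde θ hθ x
      rw [(hD θ x).deriv, hdivF x] at h0
      linarith
    have hwsqint : IntegrableOn (fun x => (w θ x)^2) Tsq :=
      integrableOn_Tsq ((hwθ.continuous).pow 2)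
    have hE'eq : E' θ = 2 * (∫ x in Tsq, P x) - 2*μ*E θ := by
      have hpt : ∀ x, 2 * w θ x * dw θ x = 2 * P x - 2*μ*(w θ x)^2 := by
        intro x; rw [hdweq x]; simp only [hP]; ring
      calc E' θ = ∫ x in Tsq, (2 * P x - 2*μ*(w θ x)^2) :=
            MeasureTheory.setIntegral_congr_fun measTsq (fun x _ => hpt x)
        _ = 2 * (∫ x in Tsq, P x) - 2*μ*E θ := by
            rw [MeasureTheory.integral_sub (hPint.const_mul 2) (hwsqint.const_mul (2*μ)),
              MeasureTheory.integral_const_mul, MeasureTheory.integral_const_mul]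
    rw [hE'eq]
    nlinarith [hEnn θ]
  -- Gronwall
  set G : ℝ → ℝ := fun θ => Real.exp (2*μ*θ) * E θ with hG
  have hGderiv : ∀ θ, HasDerivAt G (Real.exp (2*μ*θ) * (2*μ*E θ + E' θ)) θ := by
    intro θ
    have h1 : HasDerivAt (fun σ => Real.exp (2*μ*σ)) (2*μ*Real.exp (2*μ*θ)) θ := by
      have h0 : HasDerivAt (fun σ : ℝ => 2*μ*σ) (2*μ) θ := by
        simpa using (hasDerivAt_id θ).const_mul (2*μ)
      have h0e := h0.exp
      convert h0e using 1
      ring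
    have h2 := h1.fun_mul (hEderiv θ)
    exact h2.congr_deriv (by ring)
  have hanti : AntitoneOn G (Set.Icc 0 1) := by
    apply antitoneOn_of_deriv_nonpos (convex_Icc 0 1)
    · exact (Differentiable.continuous (fun θ => (hGderiv θ).differentiableAt)).continuousOn
    · intro θ _
      exact ((hGderiv θ).differentiableAt).differentiableWithinAt
    · intro θ hθ
      rw [interior_Icc] at hθ
      rw [(hGderiv θ).deriv]
      have hib := hIBP θ ⟨hθ.1.le, hθ.2.le⟩
      have hexp : 0 ≤ Real.exp (2*μ*θ) := (Real.exp_pos _).le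
      have hnp : 2*μ*E θ + E' θ ≤ 0 := by linarith
      exact mul_nonpos_iff.mpr (Or.inl ⟨hexp, hnp⟩)
  have hkey : G 1 ≤ G 0 :=
    hanti (Set.left_mem_Icc.mpr zero_le_one) (Set.right_mem_Icc.mpr zero_le_one) zero_le_one
  have hG0 : G 0 = E 0 := by simp [hG]
  have hG1 : G 1 = Real.exp (2*μ) * E 1 := by simp [hG]
  rw [hG0, hG1] at hkey
  have hpos : (0:ℝ) < Real.exp (2*μ) := Real.exp_pos _
  have : E 1 ≤ Real.exp (-(2*μ)) * E 0 := by
    rw [Real.exp_neg]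
    calc E 1 = (Real.exp (2*μ))⁻¹ * (Real.exp (2*μ) * E 1) := by field_simp
      _ ≤ (Real.exp (2*μ))⁻¹ * E 0 :=
        mul_le_mul_of_nonneg_left hkey (inv_nonneg.mpr hpos.le)
  exact this

lemma div2_smul_grad_sub (a : (ℝ×ℝ) → ℝ) (ha : ContDiff ℝ ∞ a)
    (u v : (ℝ×ℝ) → ℝ) (hu : ContDiff ℝ ∞ u) (hv : ContDiff ℝ ∞ v) (x : ℝ×ℝ) :
    div2 (fun y => a y • grad (fun z => u z - v z) y) x
      = div2 (fun y => a y • grad u y) x - div2 (fun y => a y • grad v y) x := by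
  have hdu : Differentiable ℝ u := hu.differentiable (by simp)
  have hdv : Differentiable ℝ v := hv.differentiable (by simp)
  have hd : ∀ y, fderiv ℝ (fun z => u z - v z) y = fderiv ℝ u y - fderiv ℝ v y :=
    fun y => fderiv_sub (hdu y) (hdv y)
  have c1 : (fun y => (a y • grad (fun z => u z - v z) y).1)
      = fun y => a y * fderiv ℝ u y (1,0) - a y * fderiv ℝ v y (1,0) := by
    funext y; simp [grad, hd y, ContinuousLinearMap.sub_apply, mul_sub]
  have c2 : (fun y => (a y • grad (fun z => u z - v z) y).2)
      = fun y => a y * fderiv ℝ u y (0,1) - a y * fderiv ℝ v y (0,1) := by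
    funext y; simp [grad, hd y, ContinuousLinearMap.sub_apply, mul_sub]
  have cu1 : (fun y => (a y • grad u y).1) = fun y => a y * fderiv ℝ u y (1,0) := by
    funext y; simp [grad]
  have cu2 : (fun y => (a y • grad u y).2) = fun y => a y * fderiv ℝ u y (0,1) := by
    funext y; simp [grad]
  have cv1 : (fun y => (a y • grad v y).1) = fun y => a y * fderiv ℝ v y (1,0) := by
    funext y; simp [grad]
  have cv2 : (fun y => (a y • grad v y).2) = fun y => a y * fderiv ℝ v y (0,1) := by
    funext y; simp [grad]
  have dproj : ∀ (f : (ℝ×ℝ) → ℝ), ContDiff ℝ ∞ f → ∀ (z : ℝ×ℝ),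
      Differentiable ℝ (fun y => a y * fderiv ℝ f y z) :=
    fun f hf z => (ha.mul (cdFderivApply hf z)).differentiable (by simp)
  simp only [div2, c1, c2, cu1, cu2, cv1, cv2]
  rw [fderiv_fun_sub (dproj u hu (1,0) x) (dproj v hv (1,0) x),
      fderiv_fun_sub (dproj u hu (0,1) x) (dproj v hv (0,1) x)]
  simp only [ContinuousLinearMap.sub_apply]
  ring

/-- Lemma 3.6: for any `μ > 0`, `ν > 0` and `ε > 0` the period map
`□ : L²(𝕋²) → L²(𝕋²)`, `ξ₀ ↦ ξ_μ^ν(1,·)`, is a strict contraction: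
`‖ξ_μ^ν(1,·) − ξ̃_μ^ν(1,·)‖₂ ≤ e^{−μ} ‖ξ₀ − ξ̃₀‖₂`. -/
theorem period_map_strict_contraction
    (γ : ℝ)
    (A : ℝ → (ℝ × ℝ) → ℝ) (C : ℝ → (ℝ × ℝ) → ℝ × ℝ)
    (hcoeff : CellCoeff A C)
    (hA_bdd : ∀ θ x, |A θ x| ≤ γ) (hC_bdd : ∀ θ x, ‖C θ x‖ ≤ γ)
    (μ ν ε : ℝ) (hμ : 0 < μ) (hν : 0 < ν) (hε : 0 < ε)
    (ξ0 ξt0 : (ℝ × ℝ) → ℝ) (ξ ξt : ℝ → (ℝ × ℝ) → ℝ)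
    (hξ : IsIVPSol A C μ ν ξ0 ξ) (hξt : IsIVPSol A C μ ν ξt0 ξt) :
    L2norm (fun x => ξ 1 x - ξt 1 x) ≤ Real.exp (-μ) * L2norm (fun x => ξ0 x - ξt0 x) := by
  obtain ⟨hξs, hξper, hξpde, hξic⟩ := hξ
  obtain ⟨hξts, hξtper, hξtpde, hξtic⟩ := hξt
  obtain ⟨hAs, -, hA0, -, -, hAper, -⟩ := hcoeff
  have hAx : ∀ θ, ContDiff ℝ ∞ (A θ) := slice_x (hAs.of_le (mod_cast le_top))
  have hws : ContDiff ℝ ∞ (fun p : ℝ × (ℝ×ℝ) => ξ p.1 p.2 - ξt p.1 p.2) :=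
    (hξs.of_le (mod_cast le_top)).sub (hξts.of_le (mod_cast le_top))
  have hξx : ∀ θ, ContDiff ℝ ∞ (ξ θ) := slice_x (hξs.of_le (mod_cast le_top))
  have hξtx : ∀ θ, ContDiff ℝ ∞ (ξt θ) := slice_x (hξts.of_le (mod_cast le_top))
  have hwper : ∀ θ, SpacePeriodic (fun x => ξ θ x - ξt θ x) := by
    intro θ x
    constructor
    · simp only [(hξper θ x).1, (hξtper θ x).1]
    · simp only [(hξper θ x).2, (hξtper θ x).2]
  have hwpde : ∀ θ ∈ Set.Icc (0:ℝ) 1, ∀ x : ℝ×ℝ,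
      μ * (ξ θ x - ξt θ x) + deriv (fun σ => ξ σ x - ξt σ x) θ
        - div2 (fun y => (A θ y + ν) • grad (fun z => ξ θ z - ξt θ z) y) x = 0 := by
    intro θ hθ x
    have e1 := hξpde θ hθ x
    have e2 := hξtpde θ hθ x
    have d1 := hasDerivAt_slice (hξs.of_le (mod_cast le_top)) θ x
    have d2 := hasDerivAt_slice (hξts.of_le (mod_cast le_top)) θ x
    have e3 : deriv (fun σ => ξ σ x - ξt σ x) θ
        = deriv (fun σ => ξ σ x) θ - deriv (fun σ => ξt σ x) θ := by
      rw [d1.deriv, d2.deriv, ← (d1.fun_sub d2).deriv]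
    have e4 := div2_smul_grad_sub (fun y => A θ y + ν) ((hAx θ).add contDiff_const)
        (ξ θ) (ξt θ) (hξx θ) (hξtx θ) x
    rw [e3, e4]
    linarith
  have key := energy_decay A hAx hA0 hAper μ ν hμ hν
    (fun θ x => ξ θ x - ξt θ x) hws hwper hwpde
  rw [hξic, hξtic] at key
  have h0 : 0 ≤ ∫ x in Tsq, (ξ0 x - ξt0 x)^2 :=
    MeasureTheory.integral_nonneg fun x => sq_nonneg _
  have h1 : 0 ≤ ∫ x in Tsq, (ξ 1 x - ξt 1 x)^2 :=
    MeasureTheory.integral_nonneg fun x => sq_nonneg _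
  calc L2norm (fun x => ξ 1 x - ξt 1 x)
      = (∫ x in Tsq, (ξ 1 x - ξt 1 x)^2)^(1/2:ℝ) := rfl
    _ ≤ (Real.exp (-(2*μ)) * ∫ x in Tsq, (ξ0 x - ξt0 x)^2)^(1/2:ℝ) :=
        Real.rpow_le_rpow h1 key (by norm_num)
    _ = (Real.exp (-(2*μ)))^(1/2:ℝ) * (∫ x in Tsq, (ξ0 x - ξt0 x)^2)^(1/2:ℝ) :=
        Real.mul_rpow (Real.exp_nonneg _) h0
    _ = Real.exp (-μ) * L2norm (fun x => ξ0 x - ξt0 x) := by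
        rw [← Real.exp_mul, show -(2*μ) * (1/2:ℝ) = -μ by ring, L2norm]
end
end

section
/- For any μ > 0, ν > 0 and ε > 0, the θ-periodic solution S_μ^ν of the regularized cell problem satisfies ‖S_μ^ν‖_{L^∞_#(ℝ,L²(𝕋²))} ≤ γ₃, where γ₃ depends only on γ and ν. In particular, since ∫_{𝕋²} S_μ^ν(θ,x) dx = 0 for every θ, the Fourier expansion S_μ^ν(θ,·) = Σ_{n} Ŝ_n e^{inx} has Ŝ₀ = 0 and consequently ‖S_μ^ν(θ,·)‖₂² ≤ ‖∇S_μ^ν(θ,·)‖₂² for every θ. -/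
open MeasureTheory Filter

noncomputable section

lemma pd1 {f : ℝ × ℝ → ℝ} {x y : ℝ} (hf : DifferentiableAt ℝ f (x, y)) :
    HasDerivAt (fun t => f (t, y)) (fderiv ℝ f (x, y) (1, 0)) x := by
  have h := hf.hasFDerivAt.comp_hasDerivAt x ((hasDerivAt_id x).prodMk (hasDerivAt_const x y))
  simpa [Function.comp_def] using h

lemma pd2 {f : ℝ × ℝ → ℝ} {x y : ℝ} (hf : DifferentiableAt ℝ f (x, y)) :
    HasDerivAt (fun t => f (x, t)) (fderiv ℝ f (x, y) (0, 1)) y := by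
  have h := hf.hasFDerivAt.comp_hasDerivAt y ((hasDerivAt_const y x).prodMk (hasDerivAt_id y))
  simpa [Function.comp_def] using h

lemma pdθ {G : ℝ × (ℝ × ℝ) → ℝ} {θ : ℝ} {x : ℝ × ℝ} (hG : DifferentiableAt ℝ G (θ, x)) :
    HasDerivAt (fun σ => G (σ, x)) (fderiv ℝ G (θ, x) (1, 0)) θ := by
  have h := hG.hasFDerivAt.comp_hasDerivAt θ ((hasDerivAt_id θ).prodMk (hasDerivAt_const θ x))
  simpa [Function.comp_def] using h

lemma fderiv_partial_space {G : ℝ × (ℝ × ℝ) → ℝ} (hG : Differentiable ℝ G) (θ : ℝ) (x v : ℝ × ℝ) :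
    fderiv ℝ (fun y => G (θ, y)) x v = fderiv ℝ G (θ, x) (0, v) := by
  have h : HasFDerivAt (fun y => G (θ, y))
      ((fderiv ℝ G (θ, x)).comp ((0 : (ℝ×ℝ) →L[ℝ] ℝ).prod (ContinuousLinearMap.id ℝ (ℝ×ℝ)))) x := by
    exact (hG (θ, x)).hasFDerivAt.comp x ((hasFDerivAt_const θ x).prodMk (hasFDerivAt_id x))
  rw [h.fderiv]
  simp

lemma cont_fderiv_apply {g : ℝ × ℝ → ℝ} (hg : ContDiff ℝ (⊤ : ℕ∞) g) (v : ℝ × ℝ) :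
    Continuous fun x => fderiv ℝ g x v :=
  (hg.continuous_fderiv (by simp)).clm_apply continuous_const

lemma cont_div2 {F : (ℝ×ℝ) → ℝ×ℝ} (hF : ContDiff ℝ (⊤ : ℕ∞) F) : Continuous (div2 F) :=
  (cont_fderiv_apply (contDiff_fst.comp hF) _).add (cont_fderiv_apply (contDiff_snd.comp hF) _)

lemma isCompact_Tsq : IsCompact Tsq := isCompact_Icc.prod isCompact_Icc

lemma measurable_Tsq : MeasurableSet Tsq := (measurableSet_Icc).prod measurableSet_Icc

lemma integrableOn_Tsq_s11 {g : ℝ × ℝ → ℝ} (hg : Continuous g) : IntegrableOn g Tsq :=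
  hg.continuousOn.integrableOn_compact isCompact_Tsq

/-- FTC on Icc 0 1 -/
lemma ftc_Icc {f f' : ℝ → ℝ} (hd : ∀ t, HasDerivAt f (f' t) t) (hc : Continuous f') :
    ∫ t in Set.Icc (0:ℝ) 1, f' t = f 1 - f 0 := by
  rw [MeasureTheory.integral_Icc_eq_integral_Ioc, ← intervalIntegral.integral_of_le zero_le_one]
  exact intervalIntegral.integral_eq_sub_of_hasDerivAt (fun t _ => hd t)
    (hc.intervalIntegrable 0 1)

lemma integrableOn_prod {g : ℝ × ℝ → ℝ} (hg : Continuous g) :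
    IntegrableOn g (Set.Icc (0:ℝ) 1 ×ˢ Set.Icc (0:ℝ) 1) (volume.prod volume) := by
  have := integrableOn_Tsq_s11 hg
  rwa [Tsq, MeasureTheory.Measure.volume_eq_prod] at this

lemma setIntegral_Tsq {g : ℝ × ℝ → ℝ} (hg : Continuous g) :
    ∫ z in Tsq, g z = ∫ a in Set.Icc (0:ℝ) 1, ∫ b in Set.Icc (0:ℝ) 1, g (a, b) := by
  rw [Tsq, MeasureTheory.Measure.volume_eq_prod]
  exact setIntegral_prod g (integrableOn_prod hg)

lemma setIntegral_Tsq_swap {g : ℝ × ℝ → ℝ} (hg : Continuous g) :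
    ∫ z in Tsq, g z = ∫ b in Set.Icc (0:ℝ) 1, ∫ a in Set.Icc (0:ℝ) 1, g (a, b) := by
  rw [setIntegral_Tsq hg]
  apply MeasureTheory.integral_integral_swap
  have h := integrableOn_prod hg
  rwa [IntegrableOn, ← Measure.prod_restrict] at h

lemma integral_div2_eq_zero {F : (ℝ×ℝ) → ℝ×ℝ} (hF : ContDiff ℝ (⊤ : ℕ∞) F) (hper : SpacePeriodic F) :
    ∫ x in Tsq, div2 F x = 0 := by
  have h1 : ContDiff ℝ (⊤ : ℕ∞) (fun y => (F y).1) := contDiff_fst.comp hF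
  have h2 : ContDiff ℝ (⊤ : ℕ∞) (fun y => (F y).2) := contDiff_snd.comp hF
  have c1 := cont_fderiv_apply h1 (1, 0)
  have c2 := cont_fderiv_apply h2 (0, 1)
  have hsplit : ∫ x in Tsq, div2 F x =
      (∫ x in Tsq, fderiv ℝ (fun y => (F y).1) x (1, 0)) +
      ∫ x in Tsq, fderiv ℝ (fun y => (F y).2) x (0, 1) := by
    rw [← integral_add (integrableOn_Tsq_s11 c1) (integrableOn_Tsq_s11 c2)]; rfl
  rw [hsplit]
  have e1 : ∫ x in Tsq, fderiv ℝ (fun y => (F y).1) x (1, 0) = 0 := by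
    rw [setIntegral_Tsq_swap c1]
    have h0 : Set.EqOn (fun b => ∫ a in Set.Icc (0:ℝ) 1, fderiv ℝ (fun y => (F y).1) (a, b) (1, 0))
        (fun _ => (0:ℝ)) (Set.Icc (0:ℝ) 1) := by
      intro b _
      beta_reduce
      have hd : ∀ a : ℝ, HasDerivAt (fun a => (F (a, b)).1)
          (fderiv ℝ (fun y => (F y).1) (a, b) (1, 0)) a :=
        fun a => pd1 (h1.differentiable (by simp)).differentiableAt
      rw [ftc_Icc hd (c1.comp (continuous_id.prodMk continuous_const))]
      have hp := (hper (0, b)).1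
      have he : ((0:ℝ), b) + ((1:ℝ), (0:ℝ)) = (1, b) := by simp [Prod.ext_iff]
      rw [he] at hp
      simp [hp]
    rw [setIntegral_congr_fun measurableSet_Icc h0]; simp
  have e2 : ∫ x in Tsq, fderiv ℝ (fun y => (F y).2) x (0, 1) = 0 := by
    rw [setIntegral_Tsq c2]
    have h0 : Set.EqOn (fun a => ∫ b in Set.Icc (0:ℝ) 1, fderiv ℝ (fun y => (F y).2) (a, b) (0, 1))
        (fun _ => (0:ℝ)) (Set.Icc (0:ℝ) 1) := by
      intro a _
      beta_reduce
      have hd : ∀ b : ℝ, HasDerivAt (fun b => (F (a, b)).2)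
          (fderiv ℝ (fun y => (F y).2) (a, b) (0, 1)) b :=
        fun b => pd2 (h2.differentiable (by simp)).differentiableAt
      rw [ftc_Icc hd (c2.comp (continuous_const.prodMk continuous_id))]
      have hp := (hper (a, 0)).2
      have he : ((a:ℝ), (0:ℝ)) + ((0:ℝ), (1:ℝ)) = (a, 1) := by simp [Prod.ext_iff]
      rw [he] at hp
      simp [hp]
    rw [setIntegral_congr_fun measurableSet_Icc h0]; simp
  rw [e1, e2]; ring

lemma smul_spaceperiodic {f : ℝ×ℝ→ℝ} {F : ℝ×ℝ→ℝ×ℝ} (hfp : SpacePeriodic f)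
    (hFp : SpacePeriodic F) : SpacePeriodic (fun y => f y • F y) := by
  intro x
  constructor
  · show f (x + (1,0)) • F (x + (1,0)) = _
    rw [(hfp x).1, (hFp x).1]
  · show f (x + (0,1)) • F (x + (0,1)) = _
    rw [(hfp x).2, (hFp x).2]

lemma div2_smul {f : ℝ×ℝ→ℝ} {F : ℝ×ℝ→ℝ×ℝ} (hf : ContDiff ℝ (⊤ : ℕ∞) f) (hF : ContDiff ℝ (⊤ : ℕ∞) F)
    (x : ℝ × ℝ) :
    div2 (fun y => f y • F y) x = f x * div2 F x +
      ((F x).1 * fderiv ℝ f x (1,0) + (F x).2 * fderiv ℝ f x (0,1)) := by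
  have hfd := (hf.differentiable (by simp)).differentiableAt (x := x)
  have h1d : DifferentiableAt ℝ (fun y => (F y).1) x :=
    ((contDiff_fst.comp hF).differentiable (by simp)).differentiableAt (x := x)
  have h2d : DifferentiableAt ℝ (fun y => (F y).2) x :=
    ((contDiff_snd.comp hF).differentiable (by simp)).differentiableAt (x := x)
  have e1 : (fun y => (f y • F y).1) = fun y => f y * (F y).1 := rfl
  have e2 : (fun y => (f y • F y).2) = fun y => f y * (F y).2 := rfl
  unfold div2
  rw [e1, e2, fderiv_fun_mul hfd h1d, fderiv_fun_mul hfd h2d]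
  simp only [ContinuousLinearMap.add_apply, ContinuousLinearMap.coe_smul', Pi.smul_apply,
    smul_eq_mul]
  ring

lemma ibp {f : ℝ×ℝ→ℝ} {F : ℝ×ℝ→ℝ×ℝ} (hf : ContDiff ℝ (⊤ : ℕ∞) f) (hF : ContDiff ℝ (⊤ : ℕ∞) F)
    (hfp : SpacePeriodic f) (hFp : SpacePeriodic F) :
    ∫ x in Tsq, f x * div2 F x =
      - ∫ x in Tsq, ((F x).1 * fderiv ℝ f x (1,0) + (F x).2 * fderiv ℝ f x (0,1)) := by
  have hsm : ContDiff ℝ (⊤ : ℕ∞) (fun y => f y • F y) := hf.smul hF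
  have h0 : ∫ x in Tsq, div2 (fun y => f y • F y) x = 0 :=
    integral_div2_eq_zero hsm (smul_spaceperiodic hfp hFp)
  have hc1 : Continuous fun x => f x * div2 F x := hf.continuous.mul (cont_div2 hF)
  have hc2 : Continuous fun x =>
      (F x).1 * fderiv ℝ f x (1,0) + (F x).2 * fderiv ℝ f x (0,1) :=
    ((continuous_fst.comp hF.continuous).mul (cont_fderiv_apply hf _)).add
      ((continuous_snd.comp hF.continuous).mul (cont_fderiv_apply hf _))
  have hsplit : ∫ x in Tsq, div2 (fun y => f y • F y) x =
      (∫ x in Tsq, f x * div2 F x) +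
      ∫ x in Tsq, ((F x).1 * fderiv ℝ f x (1,0) + (F x).2 * fderiv ℝ f x (0,1)) := by
    rw [← integral_add (integrableOn_Tsq_s11 hc1) (integrableOn_Tsq_s11 hc2)]
    apply setIntegral_congr_fun measurable_Tsq
    intro x _
    exact div2_smul hf hF x
  rw [hsplit] at h0
  linarith

lemma hasDerivAt_setIntegral_Tsq {G : ℝ × (ℝ × ℝ) → ℝ} (hG : ContDiff ℝ (⊤ : ℕ∞) G) (θ₀ : ℝ) :
    HasDerivAt (fun θ => ∫ x in Tsq, G (θ, x))
      (∫ x in Tsq, fderiv ℝ G (θ₀, x) (1, 0)) θ₀ := by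
  have hGc : Continuous G := hG.continuous
  have hG' : Continuous fun p : ℝ × (ℝ × ℝ) => fderiv ℝ G p (1, 0) :=
    (hG.continuous_fderiv (by simp)).clm_apply continuous_const
  obtain ⟨M, hM⟩ := (isCompact_Icc.prod isCompact_Tsq).exists_bound_of_continuousOn
    (s := Set.Icc (θ₀ - 1) (θ₀ + 1) ×ˢ Tsq) hG'.continuousOn
  have key := hasDerivAt_integral_of_dominated_loc_of_deriv_le
    (μ := volume.restrict Tsq) (F := fun θ x => G (θ, x))
    (F' := fun θ x => fderiv ℝ G (θ, x) (1, 0)) (x₀ := θ₀) (bound := fun _ => M)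
    (s := Metric.ball _ 1) (Metric.ball_mem_nhds _ one_pos)
    (Eventually.of_forall fun θ =>
      (hGc.comp (Continuous.prodMk_right θ)).aestronglyMeasurable)
    (integrableOn_Tsq_s11 (hGc.comp (Continuous.prodMk_right θ₀)))
    ((hG'.comp (Continuous.prodMk_right θ₀)).aestronglyMeasurable)
    ?_ (integrableOn_const ?_) ?_
  · exact key.2
  · filter_upwards [ae_restrict_mem measurable_Tsq] with x hx θ hθ
    have hθ' : θ ∈ Set.Icc (θ₀ - 1) (θ₀ + 1) := by
      have := Metric.mem_ball.1 hθ
      rw [Real.dist_eq] at this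
      constructor <;> [linarith [abs_lt.1 this |>.1]; linarith [abs_lt.1 this |>.2]]
    exact hM (θ, x) ⟨hθ', hx⟩
  · have : volume Tsq = 1 := by
      rw [Tsq, MeasureTheory.Measure.volume_eq_prod, Measure.prod_prod]
      simp
    rw [this]
    exact ENNReal.one_ne_top
  · filter_upwards with x θ _
    exact pdθ ((hG.differentiable (by simp)).differentiableAt)

lemma gronwall_periodic {E E' : ℝ → ℝ} (hE : ∀ θ, HasDerivAt E (E' θ) θ)
    (hper : ∀ θ, E (θ + 1) = E θ) {c K : ℝ} (hc : 0 < c)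
    (h : ∀ θ, E' θ + c * E θ ≤ K) : ∀ θ, E θ ≤ K / c := by
  set φ : ℝ → ℝ := fun θ => Real.exp (c * θ) * (E θ - K / c) with hφdef
  have hφ : ∀ θ, HasDerivAt φ (Real.exp (c * θ) * (E' θ + c * E θ - K)) θ := by
    intro θ
    have hexp : HasDerivAt (fun θ => Real.exp (c * θ)) (c * Real.exp (c * θ)) θ := by
      have := (Real.hasDerivAt_exp (c * θ)).comp θ ((hasDerivAt_id θ).const_mul c)
      simpa [mul_comm, Function.comp_def] using this
    have := hexp.mul ((hE θ).sub_const (K / c))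
    refine this.congr_deriv ?_
    linear_combination (-(Real.exp (c * θ) * K)) * mul_inv_cancel₀ hc.ne'
  have hanti : Antitone φ := by
    apply antitone_of_deriv_nonpos
    · exact fun θ => (hφ θ).differentiableAt
    · intro θ
      rw [(hφ θ).deriv]
      have := h θ
      have := Real.exp_pos (c * θ)
      nlinarith
  intro θ
  have h1 : φ (θ + 1) ≤ φ θ := hanti (by linarith)
  have h2 : φ (θ + 1) = Real.exp c * φ θ := by
    simp only [hφdef, hper θ]
    rw [mul_add, mul_one, Real.exp_add]
    ring
  rw [h2] at h1
  have hexp1 : 1 < Real.exp c := by simpa using Real.exp_lt_exp.2 hc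
  have hφnonpos : φ θ ≤ 0 := by nlinarith
  have hepos := Real.exp_pos (c * θ)
  have : E θ - K / c ≤ 0 := by
    by_contra hcon
    push_neg at hcon
    nlinarith [hφdef ▸ hφnonpos]
  linarith

lemma cs_set {s : Set ℝ} {g : ℝ → ℝ} (hg : IntegrableOn g s)
    (hg2 : IntegrableOn (fun x => g x ^ 2) s) (hfin : volume s ≠ ⊤) :
    (∫ x in s, g x) ^ 2 ≤ (volume s).toReal * ∫ x in s, (g x) ^ 2 := by
  set V := (volume s).toReal with hV
  have hV0 : 0 ≤ V := ENNReal.toReal_nonneg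
  rcases eq_or_lt_of_le hV0 with hV0' | hVpos
  · have hμ0 : volume s = 0 := by
      rcases ENNReal.toReal_eq_zero_iff _ |>.1 hV0'.symm with h | h
      · exact h
      · exact absurd h hfin
    rw [Measure.restrict_eq_zero.2 hμ0]
    simp
  · set m := (∫ x in s, g x) / V with hm
    have hnn : 0 ≤ ∫ x in s, (g x - m) ^ 2 :=
      integral_nonneg fun x => sq_nonneg _
    have hexp : ∫ x in s, (g x - m) ^ 2
        = (∫ x in s, (g x) ^ 2) - 2 * m * (∫ x in s, g x) + m ^ 2 * V := by
      have h1 : ∀ x, (g x - m) ^ 2 = g x ^ 2 - 2 * m * g x + m ^ 2 := by intro x; ring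
      simp_rw [h1]
      have hInt1 : IntegrableOn (fun x => g x ^ 2 - 2 * m * g x) s := hg2.sub (hg.const_mul (2*m))
      have hInt2 : IntegrableOn (fun _ : ℝ => m ^ 2) s := integrableOn_const hfin
      have hInt3 : IntegrableOn (fun x => 2 * m * g x) s := hg.const_mul (2*m)
      rw [integral_add hInt1 hInt2, integral_sub hg2 hInt3, MeasureTheory.integral_const_mul, setIntegral_const, measureReal_def]
      simp [hV, smul_eq_mul, mul_comm]
    rw [hexp] at hnn
    have hVne : V ≠ 0 := ne_of_gt hVpos
    have hmV : m * V = ∫ x in s, g x := by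
      rw [hm]; field_simp
    nlinarith [mul_nonneg (le_of_lt hVpos) hnn, hmV]

lemma intOnIcc {g : ℝ → ℝ} (hg : Continuous g) : IntegrableOn g (Set.Icc (0:ℝ) 1) :=
  hg.continuousOn.integrableOn_compact isCompact_Icc

lemma poincare1D {f f' : ℝ → ℝ} (hd : ∀ t, HasDerivAt f (f' t) t) (hc : Continuous f')
    (hz : ∫ x in Set.Icc (0:ℝ) 1, f x = 0) :
    ∫ x in Set.Icc (0:ℝ) 1, (f x) ^ 2 ≤ (1/2) * ∫ x in Set.Icc (0:ℝ) 1, (f' x) ^ 2 := by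
  have hf : Continuous f :=
    continuous_iff_continuousAt.2 fun x => (hd x).differentiableAt.continuousAt
  set I : Set ℝ := Set.Icc (0:ℝ) 1 with hI
  set A : ℝ := ∫ x in I, (f x) ^ 2 with hA
  set D : ℝ := ∫ x in I, (f' x) ^ 2 with hD
  have hD0 : 0 ≤ D := integral_nonneg fun x => sq_nonneg _
  have volI : (volume I).toReal = 1 := by simp [hI]
  have key : ∀ {y x : ℝ}, y ∈ I → x ∈ I → y ≤ x → (f x - f y) ^ 2 ≤ D := by
    intro y x hy hx hyx
    have hsub : f x - f y = ∫ t in Set.Ioc y x, f' t := by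
      have h := intervalIntegral.integral_eq_sub_of_hasDerivAt (f := f) (f' := f')
        (a := y) (b := x) (fun t _ => hd t) (hc.intervalIntegrable y x)
      rw [intervalIntegral.integral_of_le hyx] at h
      linarith [h]
    have hint : IntegrableOn f' (Set.Ioc y x) := hc.continuousOn.integrableOn_compact
      isCompact_Icc |>.mono_set Set.Ioc_subset_Icc_self
    have hint2 : IntegrableOn (fun t => (f' t) ^ 2) (Set.Ioc y x) :=
      ((hc.pow 2).continuousOn.integrableOn_compact isCompact_Icc).mono_set
        Set.Ioc_subset_Icc_self
    have hfin : volume (Set.Ioc y x) ≠ ⊤ := by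
      rw [Real.volume_Ioc]; exact ENNReal.ofReal_ne_top
    have hcs := cs_set hint hint2 hfin
    have hvol : (volume (Set.Ioc y x)).toReal = x - y := by
      rw [Real.volume_Ioc, ENNReal.toReal_ofReal (by linarith)]
    rw [hvol] at hcs
    have hmono : ∫ t in Set.Ioc y x, (f' t) ^ 2 ≤ D := by
      apply setIntegral_mono_set (intOnIcc (hc.pow 2))
        (Eventually.of_forall fun t => sq_nonneg _)
      exact HasSubset.Subset.eventuallyLE (Set.Ioc_subset_Icc_self.trans
        (Set.Icc_subset_Icc hy.1 hx.2))
    have h1 : x - y ≤ 1 := by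
      rcases hx with ⟨_, hx2⟩; rcases hy with ⟨hy1, _⟩; linarith
    have h2 : 0 ≤ ∫ t in Set.Ioc y x, (f' t) ^ 2 := integral_nonneg fun t => sq_nonneg _
    rw [hsub]
    nlinarith
  have step1 : ∀ x ∈ I, ∀ y ∈ I, (f x - f y) ^ 2 ≤ D := by
    intro x hx y hy
    rcases le_total y x with h | h
    · exact key hy hx h
    · rw [show (f x - f y) ^ 2 = (f y - f x) ^ 2 by ring]
      exact key hx hy h
  have step2 : ∀ x, ∫ y in I, (f x - f y) ^ 2 = (f x) ^ 2 + A := by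
    intro x
    have h1 : ∀ y, (f x - f y) ^ 2 = ((f x) ^ 2 - 2 * f x * f y) + (f y) ^ 2 := by
      intro y; ring
    simp_rw [h1]
    have hInt1 : IntegrableOn (fun y => (f x) ^ 2 - 2 * f x * f y) I :=
      (integrableOn_const (by simp [hI])).sub ((intOnIcc hf).const_mul _)
    have hInt2 : IntegrableOn (fun y => (f y) ^ 2) I := intOnIcc (hf.pow 2)
    have hInt3 : IntegrableOn (fun y => 2 * f x * f y) I := (intOnIcc hf).const_mul _
    have hInt4 : IntegrableOn (fun _ : ℝ => (f x) ^ 2) I :=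
      integrableOn_const (by simp [hI])
    rw [integral_add hInt1 hInt2, integral_sub hInt4 hInt3,
      MeasureTheory.integral_const_mul, setIntegral_const, hz, measureReal_def, volI]
    simp [hA]
  have hpt : ∀ x ∈ I, (f x) ^ 2 + A ≤ D := by
    intro x hx
    rw [← step2 x]
    calc ∫ y in I, (f x - f y) ^ 2 ≤ ∫ _ in I, D := by
          apply setIntegral_mono_on
          · exact intOnIcc (((continuous_const.sub hf).pow 2))
          · exact integrableOn_const (by simp [hI])
          · exact measurableSet_Icc
          · exact fun y hy => step1 x hx y hy
      _ = D := by rw [setIntegral_const, measureReal_def, volI]; simp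
  have hfinal : A + A ≤ D := by
    have h1 : ∫ x in I, ((f x) ^ 2 + A) = A + A := by
      rw [integral_add (intOnIcc (g := fun x => (f x) ^ 2) (hf.pow 2)) (integrableOn_const (by simp [hI])),
        setIntegral_const, measureReal_def, volI]
      simp [hA, hI]
    calc A + A = ∫ x in I, ((f x) ^ 2 + A) := h1.symm
      _ ≤ ∫ _ in I, D := by
          apply setIntegral_mono_on
          · exact (intOnIcc (hf.pow 2)).add (integrableOn_const (by simp [hI]))
          · exact integrableOn_const (by simp [hI])
          · exact measurableSet_Icc
          · exact hpt
      _ = D := by rw [setIntegral_const, measureReal_def, volI]; simp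
  linarith

lemma volume_Icc01 : (volume (Set.Icc (0:ℝ) 1)).toReal = 1 := by simp

lemma hasDerivAt_setIntegral_Icc {G : ℝ × ℝ → ℝ} (hG : ContDiff ℝ (⊤ : ℕ∞) G) (x₀ : ℝ) :
    HasDerivAt (fun x => ∫ y in Set.Icc (0:ℝ) 1, G (x, y))
      (∫ y in Set.Icc (0:ℝ) 1, fderiv ℝ G (x₀, y) (1, 0)) x₀ := by
  have hGc : Continuous G := hG.continuous
  have hG' : Continuous fun p : ℝ × ℝ => fderiv ℝ G p (1, 0) :=
    (hG.continuous_fderiv (by simp)).clm_apply continuous_const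
  obtain ⟨M, hM⟩ := (isCompact_Icc.prod isCompact_Icc).exists_bound_of_continuousOn
    (s := Set.Icc (x₀ - 1) (x₀ + 1) ×ˢ Set.Icc (0:ℝ) 1) hG'.continuousOn
  have key := hasDerivAt_integral_of_dominated_loc_of_deriv_le
    (μ := volume.restrict (Set.Icc (0:ℝ) 1)) (F := fun x y => G (x, y))
    (F' := fun x y => fderiv ℝ G (x, y) (1, 0)) (x₀ := x₀) (bound := fun _ => M)
    (s := Metric.ball _ 1) (Metric.ball_mem_nhds _ one_pos)
    (Eventually.of_forall fun x =>
      (hGc.comp (Continuous.prodMk_right x)).aestronglyMeasurable)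
    (intOnIcc (hGc.comp (Continuous.prodMk_right x₀)))
    ((hG'.comp (Continuous.prodMk_right x₀)).aestronglyMeasurable)
    ?_ (integrableOn_const ?_) ?_
  · exact key.2
  · filter_upwards [ae_restrict_mem measurableSet_Icc] with y hy x hx
    have hx' : x ∈ Set.Icc (x₀ - 1) (x₀ + 1) := by
      have := Metric.mem_ball.1 hx
      rw [Real.dist_eq] at this
      constructor <;> [linarith [abs_lt.1 this |>.1]; linarith [abs_lt.1 this |>.2]]
    exact hM (x, y) ⟨hx', hy⟩
  · rw [Real.volume_Icc]; simp
  · filter_upwards with y x _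
    exact pd1 ((hG.differentiable (by simp)).differentiableAt)

lemma poincare2D {f : ℝ × ℝ → ℝ} (hf : ContDiff ℝ (⊤ : ℕ∞) f) (hz : ∫ x in Tsq, f x = 0) :
    ∫ x in Tsq, (f x) ^ 2 ≤
      (1/2) * ∫ x in Tsq, ((fderiv ℝ f x (1,0)) ^ 2 + (fderiv ℝ f x (0,1)) ^ 2) := by
  set I : Set ℝ := Set.Icc (0:ℝ) 1 with hI
  set d1 : ℝ × ℝ → ℝ := fun p => fderiv ℝ f p (1,0) with hd1
  set d2 : ℝ × ℝ → ℝ := fun p => fderiv ℝ f p (0,1) with hd2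
  have c1 : Continuous d1 := (hf.continuous_fderiv (by simp)).clm_apply continuous_const
  have c2 : Continuous d2 := (hf.continuous_fderiv (by simp)).clm_apply continuous_const
  have hIconst : ∀ c : ℝ, IntegrableOn (fun _ : ℝ => c) I :=
    fun c => integrableOn_const (by rw [hI, Real.volume_Icc]; simp)
  set fbar : ℝ → ℝ := fun x => ∫ y in I, f (x, y) with hfbar
  set fbar' : ℝ → ℝ := fun x => ∫ y in I, d1 (x, y) with hfbar'
  have hfbarD : ∀ x, HasDerivAt fbar (fbar' x) x := fun x => hasDerivAt_setIntegral_Icc hf x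
  have hfbar'c : Continuous fbar' := by
    apply continuous_parametric_integral_of_continuous (f := fun x y => d1 (x, y))
      (s := I) ?_ isCompact_Icc
    exact c1.comp (continuous_fst.prodMk continuous_snd)
  have hfbarc : Continuous fbar :=
    continuous_iff_continuousAt.2 fun x => (hfbarD x).differentiableAt.continuousAt
  have hzbar : ∫ x in I, fbar x = 0 := by
    rw [hfbar, ← setIntegral_Tsq hf.continuous, hz]
  -- Poincaré for fbar
  have h1 : ∫ x in I, (fbar x) ^ 2 ≤ (1/2) * ∫ x in I, (fbar' x) ^ 2 :=
    poincare1D hfbarD hfbar'c hzbar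
  -- Jensen pointwise
  have hJ : ∀ x, (fbar' x) ^ 2 ≤ ∫ y in I, (d1 (x, y)) ^ 2 := by
    intro x
    have hcx : Continuous fun y => d1 (x, y) := c1.comp (Continuous.prodMk_right x)
    have hcs := cs_set (s := I) (g := fun y => d1 (x, y)) (intOnIcc hcx)
      (intOnIcc (hcx.pow 2)) (by rw [hI, Real.volume_Icc]; simp)
    rwa [volume_Icc01, one_mul] at hcs
  -- continuity of parametric squares
  have hq1 : Continuous fun x => ∫ y in I, (d1 (x, y)) ^ 2 := by
    apply continuous_parametric_integral_of_continuous
      (f := fun x y => (d1 (x, y)) ^ 2) (s := I) ?_ isCompact_Icc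
    exact (c1.comp (continuous_fst.prodMk continuous_snd)).pow 2
  have hq2 : Continuous fun x => ∫ y in I, (d2 (x, y)) ^ 2 := by
    apply continuous_parametric_integral_of_continuous
      (f := fun x y => (d2 (x, y)) ^ 2) (s := I) ?_ isCompact_Icc
    exact (c2.comp (continuous_fst.prodMk continuous_snd)).pow 2
  have hqf : Continuous fun x => ∫ y in I, (f (x, y)) ^ 2 := by
    apply continuous_parametric_integral_of_continuous
      (f := fun x y => (f (x, y)) ^ 2) (s := I) ?_ isCompact_Icc
    exact (hf.continuous.comp (continuous_fst.prodMk continuous_snd)).pow 2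
  -- slicewise estimate
  have hslice : ∀ x, ∫ y in I, (f (x, y)) ^ 2
      ≤ (1/2) * (∫ y in I, (d2 (x, y)) ^ 2) + (fbar x) ^ 2 := by
    intro x
    have hcfx : Continuous fun y => f (x, y) := hf.continuous.comp (Continuous.prodMk_right x)
    have hcd2x : Continuous fun y => d2 (x, y) := c2.comp (Continuous.prodMk_right x)
    have hdx : ∀ y, HasDerivAt (fun y => f (x, y) - fbar x) (d2 (x, y)) y := fun y =>
      (pd2 ((hf.differentiable (by simp)).differentiableAt)).sub_const (fbar x)
    have hgz : ∫ y in I, (f (x, y) - fbar x) = 0 := by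
      rw [integral_sub (intOnIcc hcfx) (hIconst (fbar x)), setIntegral_const, measureReal_def, volume_Icc01]
      simp [hfbar, hI]
    have hp := poincare1D hdx hcd2x hgz
    have hexp : ∫ y in I, (f (x, y) - fbar x) ^ 2
        = (∫ y in I, (f (x, y)) ^ 2) - (fbar x) ^ 2 := by
      have h1 : ∀ y, (f (x, y) - fbar x) ^ 2
          = (f (x, y)) ^ 2 - 2 * fbar x * f (x, y) + (fbar x) ^ 2 := by intro y; ring
      simp_rw [h1]
      have hInt1 : IntegrableOn (fun y => (f (x, y)) ^ 2 - 2 * fbar x * f (x, y)) I :=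
        (intOnIcc (hcfx.pow 2)).sub ((intOnIcc hcfx).const_mul _)
      have hInt3 : IntegrableOn (fun y => 2 * fbar x * f (x, y)) I :=
        (intOnIcc hcfx).const_mul _
      have e1 : ∫ y in I, ((f (x, y)) ^ 2 - 2 * fbar x * f (x, y) + (fbar x) ^ 2)
          = (∫ y in I, ((f (x, y)) ^ 2 - 2 * fbar x * f (x, y))) + ∫ _ in I, (fbar x) ^ 2 :=
        integral_add hInt1 (hIconst _)
      have e2 : ∫ y in I, ((f (x, y)) ^ 2 - 2 * fbar x * f (x, y))
          = (∫ y in I, (f (x, y)) ^ 2) - ∫ y in I, 2 * fbar x * f (x, y) :=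
        integral_sub (intOnIcc (hcfx.pow 2)) hInt3
      have e3 : ∫ y in I, 2 * fbar x * f (x, y) = 2 * fbar x * ∫ y in I, f (x, y) :=
        MeasureTheory.integral_const_mul _ _
      have e4 : ∫ _ in I, ((fbar x) ^ 2 : ℝ) = (fbar x) ^ 2 := by
        simp only [hI]; simp
      have e5 : ∫ y in I, f (x, y) = fbar x := rfl
      rw [e1, e2, e3, e4, e5]; ring
    rw [hexp] at hp
    linarith
  -- integrate slices
  have hmain : ∫ x in I, ∫ y in I, (f (x, y)) ^ 2
      ≤ (1/2) * (∫ x in I, ∫ y in I, (d2 (x, y)) ^ 2) + ∫ x in I, (fbar x) ^ 2 := by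
    have hmono := setIntegral_mono_on (s := I) (intOnIcc hqf)
      ((intOnIcc hq2).const_mul (1/2) |>.add (intOnIcc (hfbarc.pow 2)))
      measurableSet_Icc (fun x _ => hslice x)
    have e1 : ∫ x in I, ((1/2) * (∫ y in I, (d2 (x, y)) ^ 2) + (fbar x) ^ 2)
        = (∫ x in I, (1/2) * ∫ y in I, (d2 (x, y)) ^ 2) + ∫ x in I, (fbar x) ^ 2 :=
      integral_add ((intOnIcc hq2).const_mul (1/2)) (intOnIcc (hfbarc.pow 2))
    have e2 : ∫ x in I, (1/2) * (∫ y in I, (d2 (x, y)) ^ 2)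
        = (1/2) * ∫ x in I, ∫ y in I, (d2 (x, y)) ^ 2 :=
      MeasureTheory.integral_const_mul _ _
    simp only [Pi.add_apply, Pi.pow_apply] at hmono
    rw [e1, e2] at hmono
    exact hmono
  have hfbar2 : ∫ x in I, (fbar x) ^ 2 ≤ (1/2) * ∫ x in I, ∫ y in I, (d1 (x, y)) ^ 2 := by
    refine h1.trans ?_
    have : ∫ x in I, (fbar' x) ^ 2 ≤ ∫ x in I, ∫ y in I, (d1 (x, y)) ^ 2 :=
      setIntegral_mono_on (intOnIcc (hfbar'c.pow 2)) (intOnIcc hq1)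
        measurableSet_Icc (fun x _ => hJ x)
    linarith
  -- convert to Tsq integrals
  have ef : ∫ z in Tsq, (f z) ^ 2 = ∫ x in I, ∫ y in I, (f (x, y)) ^ 2 :=
    setIntegral_Tsq (hf.continuous.pow 2)
  have e1 : ∫ z in Tsq, (d1 z) ^ 2 = ∫ x in I, ∫ y in I, (d1 (x, y)) ^ 2 :=
    setIntegral_Tsq (c1.pow 2)
  have e2 : ∫ z in Tsq, (d2 z) ^ 2 = ∫ x in I, ∫ y in I, (d2 (x, y)) ^ 2 :=
    setIntegral_Tsq (c2.pow 2)
  have esum : ∫ z in Tsq, ((d1 z) ^ 2 + (d2 z) ^ 2)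
      = (∫ z in Tsq, (d1 z) ^ 2) + ∫ z in Tsq, (d2 z) ^ 2 :=
    integral_add (integrableOn_Tsq_s11 (c1.pow 2)) (integrableOn_Tsq_s11 (c2.pow 2))
  rw [ef, esum, e1, e2]
  linarith

lemma fderiv_translate {f : ℝ × ℝ → ℝ} (hf : Differentiable ℝ f) {c : ℝ × ℝ}
    (hp : ∀ y, f (y + c) = f y) (x : ℝ × ℝ) : fderiv ℝ f (x + c) = fderiv ℝ f x := by
  have h : HasFDerivAt (fun y => f (y + c)) (fderiv ℝ f (x + c)) x := by
    have := (hf (x + c)).hasFDerivAt.comp x ((hasFDerivAt_id x).add_const c)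
    simpa [Function.comp_def] using this
  have h2 : (fun y => f (y + c)) = f := funext hp
  rw [h2] at h
  exact h.fderiv.symm

/-- Lemma 3.10: for any `μ > 0`, `ν > 0` and `ε > 0`, the `θ`-periodic solution
`S_μ^ν` of the regularized cell problem satisfies `‖S_μ^ν‖_{L^∞_#(ℝ,L²(𝕋²))} ≤ γ₃`
with `γ₃` depending only on `γ` and `ν`.  Moreover its zeroth Fourier coefficient
vanishes (`∫_{𝕋²} S_μ^ν(θ,·) dx = 0` for every `θ`) and consequently
`‖S_μ^ν(θ,·)‖₂² ≤ ‖∇S_μ^ν(θ,·)‖₂²` for every `θ`. -/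
theorem regularized_cell_solution_L2_estimate :
    ∀ γ ν : ℝ, 0 ≤ γ → 0 < ν → ∃ γ₃ : ℝ,
      ∀ (A : ℝ → (ℝ × ℝ) → ℝ) (C : ℝ → (ℝ × ℝ) → ℝ × ℝ) (μ ε : ℝ)
        (S : ℝ → (ℝ × ℝ) → ℝ),
        0 < μ → 0 < ε → CellCoeff A C →
        (∀ θ x, |A θ x| ≤ γ) → (∀ θ x, ‖C θ x‖ ≤ γ) →
        (∀ θ x, |deriv (fun σ => A σ x) θ| ≤ γ) →
        (∀ θ x, ‖deriv (fun σ => C σ x) θ‖ ≤ γ) →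
        (∀ θ x, ‖grad (A θ) x‖ ≤ γ) →
        (∀ θ x, |div2 (C θ) x| ≤ γ) →
        IsRegCellSol A C μ ν S →
        LinfL2Norm S ≤ γ₃ ∧
        (∀ θ : ℝ, ∫ x in Tsq, S θ x = 0) ∧
        (∀ θ : ℝ, ∫ x in Tsq, (S θ x) ^ 2 ≤ ∫ x in Tsq, ‖grad (S θ) x‖ ^ 2) := by
  intro γ ν hγ hν
  refine ⟨γ / ν, ?_⟩
  intro A C μ ε S hμ hε hCoeff hAb hCb hAθb hCθb hgAb hdivCb hSol
  obtain ⟨hAsm, hCsm, hA0, hAper, hCper, hAxper, hCxper⟩ := hCoeff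
  obtain ⟨hSsm, hSθper, hSxper, hPDE⟩ := hSol
  -- partial smoothness
  have hSθ : ∀ θ, ContDiff ℝ (⊤ : ℕ∞) (S θ) := fun θ =>
    hSsm.comp (contDiff_const.prodMk contDiff_id)
  have hCθsm : ∀ θ : ℝ, ContDiff ℝ (⊤ : ℕ∞) (C θ) := fun θ =>
    hCsm.comp (contDiff_const.prodMk contDiff_id)
  have hAθsm : ∀ θ : ℝ, ContDiff ℝ (⊤ : ℕ∞) (A θ) := fun θ =>
    hAsm.comp (contDiff_const.prodMk contDiff_id)
  -- θ-derivative of S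
  have hder : ∀ (θ : ℝ) (x : ℝ × ℝ), HasDerivAt (fun σ => S σ x)
      (fderiv ℝ (fun p : ℝ × (ℝ × ℝ) => S p.1 p.2) (θ, x) (1, 0)) θ := fun θ x =>
    pdθ ((hSsm.differentiable (by simp)).differentiableAt)
  have hderiv_eq : ∀ (θ : ℝ) (x : ℝ × ℝ), deriv (fun σ => S σ x) θ =
      fderiv ℝ (fun p : ℝ × (ℝ × ℝ) => S p.1 p.2) (θ, x) (1, 0) := fun θ x =>
    (hder θ x).deriv
  -- smoothness and periodicity of the flux field
  have hgradsm : ∀ θ : ℝ, ContDiff ℝ (⊤ : ℕ∞) (grad (S θ)) := by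
    intro θ
    have h1 : ContDiff ℝ (⊤ : ℕ∞) (fun y => fderiv ℝ (S θ) y (1, 0)) :=
      ((hSθ θ).fderiv_right (by simp)).clm_apply contDiff_const
    have h2 : ContDiff ℝ (⊤ : ℕ∞) (fun y => fderiv ℝ (S θ) y (0, 1)) :=
      ((hSθ θ).fderiv_right (by simp)).clm_apply contDiff_const
    exact h1.prodMk h2
  have hFsm : ∀ θ : ℝ, ContDiff ℝ (⊤ : ℕ∞) (fun y => (A θ y + ν) • grad (S θ) y) :=
    fun θ => ((hAθsm θ).add contDiff_const).smul (hgradsm θ)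
  have hgradper : ∀ θ : ℝ, SpacePeriodic (grad (S θ)) := by
    intro θ x
    have hd := (hSθ θ).differentiable (by simp)
    constructor
    · unfold grad
      rw [fderiv_translate hd (fun y => (hSxper θ y).1) x]
    · unfold grad
      rw [fderiv_translate hd (fun y => (hSxper θ y).2) x]
  have hFper : ∀ θ : ℝ, SpacePeriodic (fun y => (A θ y + ν) • grad (S θ) y) := by
    intro θ
    apply smul_spaceperiodic _ (hgradper θ)
    intro x
    constructor
    · show A θ (x + (1, 0)) + ν = A θ x + ν
      rw [(hAxper θ x).1]
    · show A θ (x + (0, 1)) + ν = A θ x + ν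
      rw [(hAxper θ x).2]
  -- continuity packages at fixed θ
  have ca : ∀ θ : ℝ, Continuous fun x => fderiv ℝ (S θ) x (1, 0) :=
    fun θ => cont_fderiv_apply (hSθ θ) _
  have cb : ∀ θ : ℝ, Continuous fun x => fderiv ℝ (S θ) x (0, 1) :=
    fun θ => cont_fderiv_apply (hSθ θ) _
  have cS : ∀ θ : ℝ, Continuous (S θ) := fun θ => (hSθ θ).continuous
  have cdivC : ∀ θ : ℝ, Continuous (div2 (C θ)) := fun θ => cont_div2 (hCθsm θ)
  have cdivF : ∀ θ : ℝ, Continuous (div2 (fun y => (A θ y + ν) • grad (S θ) y)) :=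
    fun θ => cont_div2 (hFsm θ)
  have cA : ∀ θ : ℝ, Continuous (A θ) := fun θ => (hAθsm θ).continuous
  have cC : ∀ θ : ℝ, Continuous (C θ) := fun θ => (hCθsm θ).continuous
  -- the PDE, solved for the θ-derivative
  have hPDE' : ∀ (θ : ℝ) (x : ℝ × ℝ),
      fderiv ℝ (fun p : ℝ × (ℝ × ℝ) => S p.1 p.2) (θ, x) (1, 0) =
        div2 (C θ) x + div2 (fun y => (A θ y + ν) • grad (S θ) y) x - μ * S θ x := by
    intro θ x
    have hp := hPDE θ x
    rw [hderiv_eq θ x] at hp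
    linarith
  -- integral of a constant over Tsq
  have volTsq : (volume Tsq).toReal = 1 := by
    rw [Tsq, MeasureTheory.Measure.volume_eq_prod, Measure.prod_prod]
    simp
  have intconstTsq : ∀ c : ℝ, ∫ _ in Tsq, c = c := by
    intro c
    rw [setIntegral_const, measureReal_def, volTsq]
    simp
  have intOnConstTsq : ∀ c : ℝ, IntegrableOn (fun _ : ℝ × ℝ => c) Tsq := by
    intro c
    refine integrableOn_const ?_
    rw [Tsq, MeasureTheory.Measure.volume_eq_prod, Measure.prod_prod]
    simp
  ------------------------------------------------------------------
  -- Zero mean value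
  ------------------------------------------------------------------
  have hm_deriv : ∀ θ₀ : ℝ, HasDerivAt (fun θ => ∫ x in Tsq, S θ x)
      (-(μ * ∫ x in Tsq, S θ₀ x)) θ₀ := by
    intro θ₀
    have h := hasDerivAt_setIntegral_Tsq (G := fun p : ℝ × (ℝ × ℝ) => S p.1 p.2) hSsm θ₀
    have hval : ∫ x in Tsq, fderiv ℝ (fun p : ℝ × (ℝ × ℝ) => S p.1 p.2) (θ₀, x) (1, 0)
        = -(μ * ∫ x in Tsq, S θ₀ x) := by
      have heq : Set.EqOn
          (fun x => fderiv ℝ (fun p : ℝ × (ℝ × ℝ) => S p.1 p.2) (θ₀, x) (1, 0))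
          (fun x => div2 (C θ₀) x + div2 (fun y => (A θ₀ y + ν) • grad (S θ₀) y) x
            - μ * S θ₀ x) Tsq := fun x _ => hPDE' θ₀ x
      rw [setIntegral_congr_fun measurable_Tsq heq]
      have hi1 : IntegrableOn (fun x => div2 (C θ₀) x
          + div2 (fun y => (A θ₀ y + ν) • grad (S θ₀) y) x) Tsq :=
        (integrableOn_Tsq_s11 (cdivC θ₀)).add (integrableOn_Tsq_s11 (cdivF θ₀))
      have hi2 : IntegrableOn (fun x => μ * S θ₀ x) Tsq :=
        (integrableOn_Tsq_s11 (cS θ₀)).const_mul μ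
      have e1 : ∫ x in Tsq, (div2 (C θ₀) x
            + div2 (fun y => (A θ₀ y + ν) • grad (S θ₀) y) x - μ * S θ₀ x)
          = (∫ x in Tsq, (div2 (C θ₀) x
            + div2 (fun y => (A θ₀ y + ν) • grad (S θ₀) y) x)) - ∫ x in Tsq, μ * S θ₀ x :=
        integral_sub hi1 hi2
      have e2 : ∫ x in Tsq, (div2 (C θ₀) x
            + div2 (fun y => (A θ₀ y + ν) • grad (S θ₀) y) x)
          = (∫ x in Tsq, div2 (C θ₀) x)
            + ∫ x in Tsq, div2 (fun y => (A θ₀ y + ν) • grad (S θ₀) y) x :=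
        integral_add (integrableOn_Tsq_s11 (cdivC θ₀)) (integrableOn_Tsq_s11 (cdivF θ₀))
      have e3 : ∫ x in Tsq, μ * S θ₀ x = μ * ∫ x in Tsq, S θ₀ x :=
        MeasureTheory.integral_const_mul _ _
      rw [e1, e2, e3, integral_div2_eq_zero (hCθsm θ₀) (hCxper θ₀),
        integral_div2_eq_zero (hFsm θ₀) (hFper θ₀)]
      ring
    rw [← hval]
    exact h
  have hm_per : ∀ θ : ℝ, ∫ x in Tsq, S (θ + 1) x = ∫ x in Tsq, S θ x := by
    intro θ
    simp only [hSθper]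
  have hm0 : ∀ θ : ℝ, ∫ x in Tsq, S θ x = 0 := by
    have h1 := gronwall_periodic (E := fun θ => ∫ x in Tsq, S θ x)
      (E' := fun θ => -(μ * ∫ x in Tsq, S θ x)) (K := 0) hm_deriv hm_per hμ
      (fun θ => le_of_eq (by ring))
    have h2 := gronwall_periodic (E := fun θ => -∫ x in Tsq, S θ x)
      (E' := fun θ => μ * ∫ x in Tsq, S θ x) (K := 0)
      (fun θ => by simpa [Pi.neg_def] using (hm_deriv θ).neg)
      (fun θ => by simp only [hm_per]) hμ
      (fun θ => le_of_eq (by ring))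
    intro θ
    have := h1 θ
    have := h2 θ
    simp only [zero_div] at *
    linarith [h1 θ, h2 θ]
  ------------------------------------------------------------------
  -- Poincaré inequality for the slices
  ------------------------------------------------------------------
  have hPoin : ∀ θ : ℝ, ∫ x in Tsq, (S θ x) ^ 2 ≤
      (1/2) * ∫ x in Tsq, ((fderiv ℝ (S θ) x (1, 0)) ^ 2 + (fderiv ℝ (S θ) x (0, 1)) ^ 2) :=
    fun θ => poincare2D (hSθ θ) (hm0 θ)
  have conc3 : ∀ θ : ℝ, ∫ x in Tsq, (S θ x) ^ 2 ≤ ∫ x in Tsq, ‖grad (S θ) x‖ ^ 2 := by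
    intro θ
    refine (hPoin θ).trans ?_
    have e1 : (1/2 : ℝ) * ∫ x in Tsq, ((fderiv ℝ (S θ) x (1, 0)) ^ 2
          + (fderiv ℝ (S θ) x (0, 1)) ^ 2)
        = ∫ x in Tsq, (1/2) * ((fderiv ℝ (S θ) x (1, 0)) ^ 2
          + (fderiv ℝ (S θ) x (0, 1)) ^ 2) :=
      (MeasureTheory.integral_const_mul _ _).symm
    rw [e1]
    apply setIntegral_mono_on
    · exact integrableOn_Tsq_s11 (continuous_const.mul (((ca θ).pow 2).add ((cb θ).pow 2)))
    · refine integrableOn_Tsq_s11 ?_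
      exact (((ca θ).prodMk (cb θ)).norm).pow 2
    · exact measurable_Tsq
    · intro x _
      have h1 : |(grad (S θ) x).1| ≤ ‖grad (S θ) x‖ := by
        rw [← Real.norm_eq_abs]; exact norm_fst_le _
      have h2 : |(grad (S θ) x).2| ≤ ‖grad (S θ) x‖ := by
        rw [← Real.norm_eq_abs]; exact norm_snd_le _
      have hg1 : (grad (S θ) x).1 = fderiv ℝ (S θ) x (1, 0) := rfl
      have hg2 : (grad (S θ) x).2 = fderiv ℝ (S θ) x (0, 1) := rfl
      rw [hg1] at h1
      rw [hg2] at h2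
      have hn : 0 ≤ ‖grad (S θ) x‖ := norm_nonneg _
      nlinarith [sq_abs (fderiv ℝ (S θ) x (1, 0)), sq_abs (fderiv ℝ (S θ) x (0, 1)),
        mul_self_le_mul_self (abs_nonneg (fderiv ℝ (S θ) x (1, 0))) h1,
        mul_self_le_mul_self (abs_nonneg (fderiv ℝ (S θ) x (0, 1))) h2]
  ------------------------------------------------------------------
  -- Energy estimate
  ------------------------------------------------------------------
  have hG2sm : ContDiff ℝ (⊤ : ℕ∞) (fun p : ℝ × (ℝ × ℝ) => S p.1 p.2 ^ 2) := hSsm.pow 2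
  have hE_deriv : ∀ θ₀ : ℝ, HasDerivAt (fun θ => ∫ x in Tsq, (S θ x) ^ 2)
      (∫ x in Tsq, 2 * S θ₀ x *
        fderiv ℝ (fun p : ℝ × (ℝ × ℝ) => S p.1 p.2) (θ₀, x) (1, 0)) θ₀ := by
    intro θ₀
    have h := hasDerivAt_setIntegral_Tsq (G := fun p : ℝ × (ℝ × ℝ) => S p.1 p.2 ^ 2)
      hG2sm θ₀
    have hval : (fun x => fderiv ℝ (fun p : ℝ × (ℝ × ℝ) => S p.1 p.2 ^ 2) (θ₀, x) (1, 0))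
        = fun x => 2 * S θ₀ x *
            fderiv ℝ (fun p : ℝ × (ℝ × ℝ) => S p.1 p.2) (θ₀, x) (1, 0) := by
      funext x
      have h1 : HasDerivAt (fun σ => S σ x ^ 2)
          (fderiv ℝ (fun p : ℝ × (ℝ × ℝ) => S p.1 p.2 ^ 2) (θ₀, x) (1, 0)) θ₀ :=
        pdθ ((hG2sm.differentiable (by simp)).differentiableAt)
      have h2 := (hder θ₀ x).pow 2
      have h3 := h1.unique h2
      rw [h3]
      push_cast
      ring
    rw [← hval]
    exact h
  have hE_per : ∀ θ : ℝ, ∫ x in Tsq, (S (θ + 1) x) ^ 2 = ∫ x in Tsq, (S θ x) ^ 2 := by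
    intro θ
    simp only [hSθper]
  -- integration by parts identities
  have hibp1 : ∀ θ : ℝ, ∫ x in Tsq, S θ x * div2 (C θ) x =
      - ∫ x in Tsq, ((C θ x).1 * fderiv ℝ (S θ) x (1, 0)
        + (C θ x).2 * fderiv ℝ (S θ) x (0, 1)) :=
    fun θ => ibp (hSθ θ) (hCθsm θ) (hSxper θ) (hCxper θ)
  have hibp2 : ∀ θ : ℝ, ∫ x in Tsq,
      S θ x * div2 (fun y => (A θ y + ν) • grad (S θ) y) x =
      - ∫ x in Tsq, (A θ x + ν) *
        ((fderiv ℝ (S θ) x (1, 0)) ^ 2 + (fderiv ℝ (S θ) x (0, 1)) ^ 2) := by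
    intro θ
    have h := ibp (hSθ θ) (hFsm θ) (hSxper θ) (hFper θ)
    rw [h]
    congr 1
    apply setIntegral_congr_fun measurable_Tsq
    intro x _
    show ((A θ x + ν) • grad (S θ) x).1 * fderiv ℝ (S θ) x (1, 0)
        + ((A θ x + ν) • grad (S θ) x).2 * fderiv ℝ (S θ) x (0, 1) = _
    have e1 : ((A θ x + ν) • grad (S θ) x).1 = (A θ x + ν) * fderiv ℝ (S θ) x (1, 0) := rfl
    have e2 : ((A θ x + ν) • grad (S θ) x).2 = (A θ x + ν) * fderiv ℝ (S θ) x (0, 1) := rfl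
    rw [e1, e2]
    ring
  -- the energy identity
  have hEid : ∀ θ : ℝ, ∫ x in Tsq, 2 * S θ x *
        fderiv ℝ (fun p : ℝ × (ℝ × ℝ) => S p.1 p.2) (θ, x) (1, 0)
      = 2 * (∫ x in Tsq, S θ x * div2 (C θ) x)
        + 2 * (∫ x in Tsq, S θ x * div2 (fun y => (A θ y + ν) • grad (S θ) y) x)
        - 2 * μ * ∫ x in Tsq, (S θ x) ^ 2 := by
    intro θ
    have heq : Set.EqOn (fun x => 2 * S θ x *
          fderiv ℝ (fun p : ℝ × (ℝ × ℝ) => S p.1 p.2) (θ, x) (1, 0))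
        (fun x => 2 * (S θ x * div2 (C θ) x)
          + 2 * (S θ x * div2 (fun y => (A θ y + ν) • grad (S θ) y) x)
          - 2 * μ * (S θ x) ^ 2) Tsq := by
      intro x _
      beta_reduce
      rw [hPDE' θ x]
      ring
    rw [setIntegral_congr_fun measurable_Tsq heq]
    have hi1 : IntegrableOn (fun x => 2 * (S θ x * div2 (C θ) x)) Tsq :=
      (integrableOn_Tsq_s11 ((cS θ).mul (cdivC θ))).const_mul 2
    have hi2 : IntegrableOn
        (fun x => 2 * (S θ x * div2 (fun y => (A θ y + ν) • grad (S θ) y) x)) Tsq :=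
      (integrableOn_Tsq_s11 ((cS θ).mul (cdivF θ))).const_mul 2
    have hi3 : IntegrableOn (fun x => 2 * μ * (S θ x) ^ 2) Tsq :=
      (integrableOn_Tsq_s11 ((cS θ).pow 2)).const_mul _
    have e1 : ∫ x in Tsq, (2 * (S θ x * div2 (C θ) x)
          + 2 * (S θ x * div2 (fun y => (A θ y + ν) • grad (S θ) y) x)
          - 2 * μ * (S θ x) ^ 2)
        = (∫ x in Tsq, (2 * (S θ x * div2 (C θ) x)
          + 2 * (S θ x * div2 (fun y => (A θ y + ν) • grad (S θ) y) x)))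
          - ∫ x in Tsq, 2 * μ * (S θ x) ^ 2 :=
      integral_sub (hi1.add hi2) hi3
    have e2 : ∫ x in Tsq, (2 * (S θ x * div2 (C θ) x)
          + 2 * (S θ x * div2 (fun y => (A θ y + ν) • grad (S θ) y) x))
        = (∫ x in Tsq, 2 * (S θ x * div2 (C θ) x))
          + ∫ x in Tsq, 2 * (S θ x * div2 (fun y => (A θ y + ν) • grad (S θ) y) x) :=
      integral_add hi1 hi2
    have e3 : ∫ x in Tsq, 2 * (S θ x * div2 (C θ) x)
        = 2 * ∫ x in Tsq, S θ x * div2 (C θ) x := MeasureTheory.integral_const_mul _ _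
    have e4 : ∫ x in Tsq, 2 * (S θ x * div2 (fun y => (A θ y + ν) • grad (S θ) y) x)
        = 2 * ∫ x in Tsq, S θ x * div2 (fun y => (A θ y + ν) • grad (S θ) y) x :=
      MeasureTheory.integral_const_mul _ _
    have e5 : ∫ x in Tsq, 2 * μ * (S θ x) ^ 2 = 2 * μ * ∫ x in Tsq, (S θ x) ^ 2 :=
      MeasureTheory.integral_const_mul _ _
    rw [e1, e2, e3, e4, e5]
  -- the key differential inequality
  have hKey : ∀ θ : ℝ, (∫ x in Tsq, 2 * S θ x *
        fderiv ℝ (fun p : ℝ × (ℝ × ℝ) => S p.1 p.2) (θ, x) (1, 0))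
      + (2 * ν) * ∫ x in Tsq, (S θ x) ^ 2 ≤ 2 * γ ^ 2 / ν := by
    intro θ
    rw [hEid θ, hibp1 θ, hibp2 θ]
    have hE0 : (0:ℝ) ≤ ∫ x in Tsq, (S θ x) ^ 2 := integral_nonneg fun x => sq_nonneg _
    have hgradint : IntegrableOn (fun x => (fderiv ℝ (S θ) x (1, 0)) ^ 2
        + (fderiv ℝ (S θ) x (0, 1)) ^ 2) Tsq :=
      integrableOn_Tsq_s11 (((ca θ).pow 2).add ((cb θ).pow 2))
    have hU2 : ν * (∫ x in Tsq, ((fderiv ℝ (S θ) x (1, 0)) ^ 2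
          + (fderiv ℝ (S θ) x (0, 1)) ^ 2))
        ≤ ∫ x in Tsq, (A θ x + ν) *
          ((fderiv ℝ (S θ) x (1, 0)) ^ 2 + (fderiv ℝ (S θ) x (0, 1)) ^ 2) := by
      have e : ν * (∫ x in Tsq, ((fderiv ℝ (S θ) x (1, 0)) ^ 2
            + (fderiv ℝ (S θ) x (0, 1)) ^ 2))
          = ∫ x in Tsq, ν * ((fderiv ℝ (S θ) x (1, 0)) ^ 2
            + (fderiv ℝ (S θ) x (0, 1)) ^ 2) := (MeasureTheory.integral_const_mul _ _).symm
      rw [e]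
      apply setIntegral_mono_on
      · exact hgradint.const_mul ν
      · exact integrableOn_Tsq_s11 (((cA θ).add continuous_const).mul
          (((ca θ).pow 2).add ((cb θ).pow 2)))
      · exact measurable_Tsq
      · intro x _
        have := hA0 θ x
        nlinarith [sq_nonneg (fderiv ℝ (S θ) x (1, 0)), sq_nonneg (fderiv ℝ (S θ) x (0, 1))]
    have hPo := hPoin θ
    -- bound for the C-term
    have hCbd : -(2 * ∫ x in Tsq, ((C θ x).1 * fderiv ℝ (S θ) x (1, 0)
          + (C θ x).2 * fderiv ℝ (S θ) x (0, 1)))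
        - ν * (∫ x in Tsq, ((fderiv ℝ (S θ) x (1, 0)) ^ 2
          + (fderiv ℝ (S θ) x (0, 1)) ^ 2)) ≤ 2 * γ ^ 2 / ν := by
      have hCint : IntegrableOn (fun x => (C θ x).1 * fderiv ℝ (S θ) x (1, 0)
          + (C θ x).2 * fderiv ℝ (S θ) x (0, 1)) Tsq :=
        integrableOn_Tsq_s11 (((continuous_fst.comp (cC θ)).mul (ca θ)).add
          ((continuous_snd.comp (cC θ)).mul (cb θ)))
      have hsplit : ∫ x in Tsq, (-(2 * ((C θ x).1 * fderiv ℝ (S θ) x (1, 0)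
            + (C θ x).2 * fderiv ℝ (S θ) x (0, 1)))
            - ν * ((fderiv ℝ (S θ) x (1, 0)) ^ 2 + (fderiv ℝ (S θ) x (0, 1)) ^ 2))
          = -(2 * ∫ x in Tsq, ((C θ x).1 * fderiv ℝ (S θ) x (1, 0)
            + (C θ x).2 * fderiv ℝ (S θ) x (0, 1)))
            - ν * (∫ x in Tsq, ((fderiv ℝ (S θ) x (1, 0)) ^ 2
            + (fderiv ℝ (S θ) x (0, 1)) ^ 2)) := by
        have e1 : ∫ x in Tsq, (-(2 * ((C θ x).1 * fderiv ℝ (S θ) x (1, 0)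
              + (C θ x).2 * fderiv ℝ (S θ) x (0, 1)))
              - ν * ((fderiv ℝ (S θ) x (1, 0)) ^ 2 + (fderiv ℝ (S θ) x (0, 1)) ^ 2))
            = (∫ x in Tsq, -(2 * ((C θ x).1 * fderiv ℝ (S θ) x (1, 0)
              + (C θ x).2 * fderiv ℝ (S θ) x (0, 1))))
              - ∫ x in Tsq, ν * ((fderiv ℝ (S θ) x (1, 0)) ^ 2
              + (fderiv ℝ (S θ) x (0, 1)) ^ 2) :=
          integral_sub ((hCint.const_mul 2).neg) (hgradint.const_mul ν)
        have e2 : ∫ x in Tsq, -(2 * ((C θ x).1 * fderiv ℝ (S θ) x (1, 0)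
              + (C θ x).2 * fderiv ℝ (S θ) x (0, 1)))
            = -∫ x in Tsq, 2 * ((C θ x).1 * fderiv ℝ (S θ) x (1, 0)
              + (C θ x).2 * fderiv ℝ (S θ) x (0, 1)) := integral_neg _
        have e3 : ∫ x in Tsq, 2 * ((C θ x).1 * fderiv ℝ (S θ) x (1, 0)
              + (C θ x).2 * fderiv ℝ (S θ) x (0, 1))
            = 2 * ∫ x in Tsq, ((C θ x).1 * fderiv ℝ (S θ) x (1, 0)
              + (C θ x).2 * fderiv ℝ (S θ) x (0, 1)) := MeasureTheory.integral_const_mul _ _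
        have e4 : ∫ x in Tsq, ν * ((fderiv ℝ (S θ) x (1, 0)) ^ 2
              + (fderiv ℝ (S θ) x (0, 1)) ^ 2)
            = ν * ∫ x in Tsq, ((fderiv ℝ (S θ) x (1, 0)) ^ 2
              + (fderiv ℝ (S θ) x (0, 1)) ^ 2) := MeasureTheory.integral_const_mul _ _
        rw [e1, e2, e3, e4]
      rw [← hsplit]
      have hmono : ∫ x in Tsq, (-(2 * ((C θ x).1 * fderiv ℝ (S θ) x (1, 0)
            + (C θ x).2 * fderiv ℝ (S θ) x (0, 1)))
            - ν * ((fderiv ℝ (S θ) x (1, 0)) ^ 2 + (fderiv ℝ (S θ) x (0, 1)) ^ 2))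
          ≤ ∫ _ in Tsq, 2 * γ ^ 2 / ν := by
        apply setIntegral_mono_on
        · exact ((hCint.const_mul 2).neg).sub (hgradint.const_mul ν)
        · exact intOnConstTsq _
        · exact measurable_Tsq
        · intro x _
          have hc1 : |(C θ x).1| ≤ γ := by
            rw [← Real.norm_eq_abs]; exact (norm_fst_le _).trans (hCb θ x)
          have hc2 : |(C θ x).2| ≤ γ := by
            rw [← Real.norm_eq_abs]; exact (norm_snd_le _).trans (hCb θ x)
          have ha1 := abs_le.1 hc1
          have ha2 := abs_le.1 hc2
          have h1 : 0 < ν := hν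
          rw [le_div_iff₀ h1]
          nlinarith [sq_nonneg (ν * fderiv ℝ (S θ) x (1, 0) + (C θ x).1),
            sq_nonneg (ν * fderiv ℝ (S θ) x (0, 1) + (C θ x).2),
            ha1.1, ha1.2, ha2.1, ha2.2, hγ]
      calc _ ≤ ∫ _ in Tsq, 2 * γ ^ 2 / ν := hmono
        _ = 2 * γ ^ 2 / ν := intconstTsq _
    nlinarith [mul_nonneg hμ.le hE0]
  -- Gronwall
  have hEbd : ∀ θ : ℝ, ∫ x in Tsq, (S θ x) ^ 2 ≤ (γ / ν) ^ 2 := by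
    have h := gronwall_periodic (E := fun θ => ∫ x in Tsq, (S θ x) ^ 2)
      (E' := fun θ => ∫ x in Tsq, 2 * S θ x *
        fderiv ℝ (fun p : ℝ × (ℝ × ℝ) => S p.1 p.2) (θ, x) (1, 0))
      hE_deriv hE_per (by positivity : (0:ℝ) < 2 * ν) hKey
    intro θ
    have := h θ
    have e : (2 * γ ^ 2 / ν) / (2 * ν) = (γ / ν) ^ 2 := by
      field_simp
    rwa [e] at this
  -- conclusion 1
  have conc1 : LinfL2Norm S ≤ γ / ν := by
    have hne : Nonempty (Set.Icc (0:ℝ) 1) := ⟨⟨0, by norm_num⟩⟩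
    apply ciSup_le
    intro θ
    show (∫ x in Tsq, (S θ.1 x) ^ 2) ^ (1/2 : ℝ) ≤ γ / ν
    have h0 : (0:ℝ) ≤ ∫ x in Tsq, (S θ.1 x) ^ 2 := integral_nonneg fun x => sq_nonneg _
    have hγν : (0:ℝ) ≤ γ / ν := div_nonneg hγ hν.le
    calc (∫ x in Tsq, (S θ.1 x) ^ 2) ^ (1/2 : ℝ)
        ≤ ((γ / ν) ^ 2) ^ (1/2 : ℝ) :=
          Real.rpow_le_rpow h0 (hEbd θ.1) (by norm_num)
      _ = γ / ν := by
          rw [← Real.rpow_natCast (γ / ν) 2, ← Real.rpow_mul hγν]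
          norm_num
  exact ⟨conc1, hm0, conc3⟩
end
end
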